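/- arXiv:1109.3592 — 7 statements merged into one kernel-verified Lean document; each statement's English description precedes it below -/
import Mathlib

section
/- Let f : ℝⁿ → ℝ ∪ {±∞} be a proper closed convex function and suppose the hyperplane H(u,s,α) is a supporting hyperplane to epi f. Then every point of H(u,s,α) ∩ epi f is K-minimal in epi f (where K = {0}ⁿ × [0,∞)) if and only if s < 0. -/
open Matrix Set
open scoped Pointwise

noncomputable section

/-- The epigraph of an extended-real-valued function on ℝⁿ. -/
def epi (n : ℕ) (f : (Fin n → ℝ) → EReal) : Set ((Fin n → ℝ) × ℝ) :=
  {p | f p.1 ≤ (p.2 : EReal)}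

/-- The hyperplane H(u,s,α) = {(x,r) : ⟨x,u⟩ + r·s = α} in ℝⁿ × ℝ. -/
def Hyp (n : ℕ) (u : Fin n → ℝ) (s α : ℝ) : Set ((Fin n → ℝ) × ℝ) :=
  {p | p.1 ⬝ᵥ u + p.2 * s = α}

/-- H(u,s,α) is a supporting hyperplane to A. -/
def IsSuppHyp (n : ℕ) (A : Set ((Fin n → ℝ) × ℝ)) (u : Fin n → ℝ) (s α : ℝ) : Prop :=
  (u, s) ≠ 0 ∧ (Hyp n u s α ∩ A).Nonempty ∧ ∀ p ∈ A, p.1 ⬝ᵥ u + p.2 * s ≤ α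

/-- The ordering cone K = {0}ⁿ × [0,∞) in ℝⁿ × ℝ. -/
def Kcone (n : ℕ) : Set ((Fin n → ℝ) × ℝ) := {p | p.1 = 0 ∧ 0 ≤ p.2}

/-- y is K-minimal in A : ({y} − (K \ (−K))) ∩ A = ∅. -/
def KMinPt (n : ℕ) (A : Set ((Fin n → ℝ) × ℝ)) (y : (Fin n → ℝ) × ℝ) : Prop :=
  ({y} - (Kcone n \ (-Kcone n))) ∩ A = ∅

/-- for a supporting hyperplane H(u,s,α) of the epigraph of a proper
closed convex function, every point of H(u,s,α) ∩ epi f is K-minimal in epi f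
iff s < 0. -/
theorem stmt1 (n : ℕ) (f : (Fin n → ℝ) → EReal)
    (hdom : ∃ x, f x ≠ ⊤) (hbot : ∀ x, f x ≠ ⊥)
    (hclosed : IsClosed (epi n f)) (hconv : Convex ℝ (epi n f))
    (u : Fin n → ℝ) (s α : ℝ)
    (hsupp : IsSuppHyp n (epi n f) u s α) :
    (∀ y ∈ Hyp n u s α ∩ epi n f, KMinPt n (epi n f) y) ↔ s < 0 := by
  obtain ⟨hne, ⟨y, hyH, hyE⟩, hle⟩ := hsupp
  simp only [Hyp, mem_setOf_eq] at hyH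
  constructor
  · intro hmin
    have hE1 : ((y.1, y.2 + 1) : (Fin n → ℝ) × ℝ) ∈ epi n f := by
      simp only [epi, mem_setOf_eq] at hyE ⊢
      exact hyE.trans (by exact_mod_cast (by linarith : y.2 ≤ y.2 + 1))
    have hle1 := hle _ hE1
    simp only at hle1
    have hs' : s ≤ 0 := by nlinarith
    rcases lt_or_eq_of_le hs' with h | h
    · exact h
    · exfalso
      have hH1 : ((y.1, y.2 + 1) : (Fin n → ℝ) × ℝ) ∈ Hyp n u s α := by
        simp only [Hyp, mem_setOf_eq, ← h] at hyH ⊢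
        linarith
      have hk : ((0, 1) : (Fin n → ℝ) × ℝ) ∈ Kcone n \ -Kcone n := by
        constructor
        · exact ⟨rfl, zero_le_one⟩
        · intro hc
          rw [Set.mem_neg] at hc
          have := hc.2
          norm_num at this
      have hy' : y ∈ ({((y.1, y.2 + 1) : (Fin n → ℝ) × ℝ)} - (Kcone n \ -Kcone n)) ∩ epi n f := by
        refine ⟨?_, hyE⟩
        rw [Set.mem_sub]
        exact ⟨(y.1, y.2 + 1), rfl, (0, 1), hk, by ext <;> simp⟩
      have := hmin _ ⟨hH1, hE1⟩
      rw [KMinPt] at this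
      rw [this] at hy'
      exact hy'
  · intro hs z ⟨hzH, hzE⟩
    simp only [Hyp, mem_setOf_eq] at hzH
    rw [KMinPt, Set.eq_empty_iff_forall_notMem]
    rintro p ⟨hp1, hp2⟩
    rw [Set.mem_sub] at hp1
    obtain ⟨a, ha, k, hk, hak⟩ := hp1
    rw [Set.mem_singleton_iff] at ha
    subst ha
    obtain ⟨⟨hk1, hk2⟩, hknot⟩ := hk
    have hk2' : 0 < k.2 := by
      rcases lt_or_eq_of_le hk2 with h | h
      · exact h
      · exfalso
        apply hknot
        rw [Set.mem_neg]
        constructor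
        · simp [hk1]
        · simp [← h]
    have hple := hle _ hp2
    rw [← hak] at hple
    simp only [Prod.fst_sub, Prod.snd_sub, hk1, sub_zero] at hple
    nlinarith
end
end

section
/- Let f : ℝⁿ → ℝ ∪ {±∞} be a proper closed convex function. A subset F* ⊆ epi f* is a K-minimal exposed face of epi f* if and only if there exists x̄ ∈ dom f with ∂f(x̄) ≠ ∅ such that F* = {(u, f*(u)) ∈ ℝⁿ × ℝ : u ∈ ∂f(x̄)}. -/
open Matrix Set
open scoped Pointwise

noncomputable section

/-- The Legendre–Fenchel conjugate f*(u) = sup_x (⟨x,u⟩ − f(x)). -/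
def conj (n : ℕ) (f : (Fin n → ℝ) → EReal) (u : Fin n → ℝ) : EReal :=
  ⨆ x : Fin n → ℝ, (((x ⬝ᵥ u : ℝ) : EReal) - f x)

/-- The subdifferential ∂g(x₀) = {u : ∀x, g(x) ≥ g(x₀) + ⟨u, x − x₀⟩}. -/
def subdiff (n : ℕ) (g : (Fin n → ℝ) → EReal) (x₀ : Fin n → ℝ) : Set (Fin n → ℝ) :=
  {u | ∀ x : Fin n → ℝ, g x₀ + ((u ⬝ᵥ (x - x₀) : ℝ) : EReal) ≤ g x}

/-- E is an exposed face of A: E = H ∩ A for some supporting hyperplane H of A. -/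
def IsExpFace (n : ℕ) (A E : Set ((Fin n → ℝ) × ℝ)) : Prop :=
  ∃ (u : Fin n → ℝ) (s α : ℝ), IsSuppHyp n A u s α ∧ E = Hyp n u s α ∩ A

/-- E is a K-minimal exposed face of A: an exposed face all of whose points are
K-minimal in A. -/
def IsKMinExpFace (n : ℕ) (A E : Set ((Fin n → ℝ) × ℝ)) : Prop :=
  IsExpFace n A E ∧ ∀ y ∈ E, KMinPt n A y

/-- The duality map Ψ(F*) := ⋂_{(u,f*(u)) ∈ F*} {(x,f(x)) : u ∈ ∂f(x)}. -/
def Psi (n : ℕ) (f : (Fin n → ℝ) → EReal) (Fs : Set ((Fin n → ℝ) × ℝ)) :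
    Set ((Fin n → ℝ) × ℝ) :=
  ⋂ q ∈ {q ∈ Fs | (q.2 : EReal) = conj n f q.1},
    {p | (p.2 : EReal) = f p.1 ∧ q.1 ∈ subdiff n f p.1}

/-- The inverse duality map Ψ*(F) := ⋂_{(x,f(x)) ∈ F} {(u,f*(u)) : u ∈ ∂f(x)}. -/
def PsiStar (n : ℕ) (f : (Fin n → ℝ) → EReal) (F : Set ((Fin n → ℝ) × ℝ)) :
    Set ((Fin n → ℝ) × ℝ) :=
  ⋂ p ∈ {p ∈ F | (p.2 : EReal) = f p.1},
    {q | (q.2 : EReal) = conj n f q.1 ∧ q.1 ∈ subdiff n f p.1}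

/-!
A supporting hyperplane of `epi f*` whose contact points are all `K`-minimal cannot be vertical,
since it would then contain a vertical ray above each contact point; rescaled, it is the graph of
`u ↦ ⟨x̄, u⟩ - β`. That `epi f*` lies above this graph says `f**(x̄) ≤ β`, and the Hahn–Banach
argument behind the Fenchel–Moreau theorem turns this into `f(x̄) ≤ β`, while touching `epi f*`
gives `β ≤ f(x̄)` by Fenchel–Young. Once `f(x̄) = β`, the contact set is the graph of `f*` over
`∂f(x̄)`, because `u ∈ ∂f(x̄)` exactly when the Fenchel–Young inequality at `(x̄, u)` is an equality.
-/

lemma EReal.coe_le_iff_forall_le_coe {c : ℝ} {y : EReal} :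
    (c : EReal) ≤ y ↔ ∀ r : ℝ, y ≤ r → c ≤ r :=
  ⟨fun h _ hr => EReal.coe_le_coe_iff.mp (h.trans hr),
    fun h => EReal.le_of_forall_lt_iff_le.mp fun r hr => EReal.coe_le_coe_iff.mpr (h r hr.le)⟩

lemma EReal.coe_sub_le_coe_iff {a r : ℝ} {y : EReal} :
    (a : EReal) - y ≤ r ↔ ((a - r : ℝ) : EReal) ≤ y := by
  induction y using EReal.rec with
  | bot => simpa using EReal.coe_ne_bot (a - r)
  | top => simp
  | coe b => norm_cast; constructor <;> intro h <;> linarith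

section Conjugate

variable {n : ℕ} {f : (Fin n → ℝ) → EReal}

lemma coe_sub_le_conj {x : Fin n → ℝ} {a : ℝ} (hx : f x = a) (u : Fin n → ℝ) :
    ((x ⬝ᵥ u - a : ℝ) : EReal) ≤ conj n f u := by
  rw [EReal.coe_sub, ← hx]
  exact le_iSup (fun x => ((x ⬝ᵥ u : ℝ) : EReal) - f x) x

lemma conj_le_coe_iff {u : Fin n → ℝ} {r : ℝ} :
    conj n f u ≤ r ↔ ∀ p ∈ epi n f, p.1 ⬝ᵥ u - p.2 ≤ r := by
  simp only [conj, iSup_le_iff, EReal.coe_sub_le_coe_iff, EReal.coe_le_iff_forall_le_coe,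
    Prod.forall, epi, Set.mem_ofPred_eq]
  refine forall_congr' fun x => forall_congr' fun s => imp_congr_right fun _ => ?_
  constructor <;> intro h <;> linarith

lemma mem_subdiff_iff_conj_le {x : Fin n → ℝ} {a : ℝ} (hx : f x = a) {u : Fin n → ℝ} :
    u ∈ subdiff n f x ↔ conj n f u ≤ ((x ⬝ᵥ u - a : ℝ) : EReal) := by
  simp only [subdiff, conj_le_coe_iff, hx, ← EReal.coe_add, EReal.coe_le_iff_forall_le_coe,
    Prod.forall, epi, Set.mem_ofPred_eq, dotProduct_sub, dotProduct_comm u]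
  refine forall_congr' fun y => forall_congr' fun s => imp_congr_right fun _ => ?_
  constructor <;> intro h <;> linarith

lemma mem_subdiff_iff_conj_eq {x : Fin n → ℝ} {a : ℝ} (hx : f x = a) {u : Fin n → ℝ} :
    u ∈ subdiff n f x ↔ conj n f u = ((x ⬝ᵥ u - a : ℝ) : EReal) :=
  (mem_subdiff_iff_conj_le hx).trans ⟨fun h => h.antisymm (coe_sub_le_conj hx u), le_of_eq⟩

lemma graph_conj_subdiff_eq_hyp_inter_epi {x : Fin n → ℝ} {a : ℝ} (hx : f x = a) :
    {q : (Fin n → ℝ) × ℝ | (q.2 : EReal) = conj n f q.1 ∧ q.1 ∈ subdiff n f x} =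
      Hyp n x (-1) a ∩ epi n (conj n f) := by
  ext ⟨u, r⟩
  simp only [Set.mem_ofPred_eq, Set.mem_inter_iff, Hyp, epi, mem_subdiff_iff_conj_eq hx]
  constructor
  · rintro ⟨hr, hu⟩
    have : r = x ⬝ᵥ u - a := EReal.coe_injective (hr.trans hu)
    exact ⟨by rw [dotProduct_comm]; linarith, hr.ge⟩
  · rintro ⟨hr, hu⟩
    have hr' : r = x ⬝ᵥ u - a := by rw [dotProduct_comm] at hr; linarith
    subst hr'
    have hconj := hu.antisymm (coe_sub_le_conj hx u)
    exact ⟨hconj.symm, hconj⟩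

lemma isSuppHyp_epi_conj {x : Fin n → ℝ} {a : ℝ} (hx : f x = a)
    (hne : (subdiff n f x).Nonempty) : IsSuppHyp n (epi n (conj n f)) x (-1) a := by
  refine ⟨fun h => by simpa using congrArg Prod.snd h, ?_, fun p hp => ?_⟩
  · obtain ⟨u, hu⟩ := hne
    exact ⟨(u, x ⬝ᵥ u - a), by
      rw [← graph_conj_subdiff_eq_hyp_inter_epi hx]
      exact ⟨((mem_subdiff_iff_conj_eq hx).mp hu).symm, hu⟩⟩
  · have := EReal.coe_le_coe_iff.mp ((coe_sub_le_conj hx p.1).trans hp)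
    rw [dotProduct_comm]
    linarith

end Conjugate

section KMinimal

variable {n : ℕ}

lemma mem_Kcone_diff_neg_iff {k : (Fin n → ℝ) × ℝ} :
    k ∈ Kcone n \ -Kcone n ↔ k.1 = 0 ∧ 0 < k.2 := by
  simp only [Kcone, Set.mem_sdiff, Set.mem_neg, Set.mem_ofPred_eq, Prod.fst_neg, Prod.snd_neg,
    neg_eq_zero, neg_nonneg]
  constructor
  · rintro ⟨⟨h1, h2⟩, h3⟩
    exact ⟨h1, h2.lt_of_ne fun h => h3 ⟨h1, h.ge⟩⟩
  · rintro ⟨h1, h2⟩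
    exact ⟨⟨h1, h2.le⟩, fun h => h2.not_ge h.2⟩

lemma kMinPt_iff {A : Set ((Fin n → ℝ) × ℝ)} {y : (Fin n → ℝ) × ℝ} :
    KMinPt n A y ↔ ∀ t : ℝ, 0 < t → (y.1, y.2 - t) ∉ A := by
  simp only [KMinPt, Set.singleton_sub, Set.eq_empty_iff_forall_notMem, Set.mem_inter_iff,
    Set.mem_image, mem_Kcone_diff_neg_iff, not_and, forall_exists_index, and_imp, Prod.forall]
  constructor
  · intro h t ht hA
    exact h _ _ 0 t rfl ht (by ext <;> simp) hA
  · rintro h _ _ _ t rfl ht hz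
    rw [← hz, show y - (0, t) = (y.1, y.2 - t) by ext <;> simp]
    exact h t ht

lemma kMinPt_epi_iff {g : (Fin n → ℝ) → EReal} {y : (Fin n → ℝ) × ℝ} (hy : y ∈ epi n g) :
    KMinPt n (epi n g) y ↔ (y.2 : EReal) = g y.1 := by
  rw [kMinPt_iff]
  constructor
  · intro h
    by_contra hne
    obtain ⟨c, hgc, hcy⟩ := EReal.lt_iff_exists_real_btwn.mp (lt_of_le_of_ne hy (Ne.symm hne))
    exact h (y.2 - c) (by simpa using hcy) (by simpa [epi] using hgc.le)
  · intro h t ht hA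
    have : (y.2 : EReal) ≤ (y.2 - t : ℝ) := h.trans_le hA
    linarith [EReal.coe_le_coe_iff.mp this]

end KMinimal

section Hyperplane

variable {n : ℕ}

lemma IsSuppHyp.snd_neg_of_kMinPt {g : (Fin n → ℝ) → EReal} {v : Fin n → ℝ} {s α : ℝ}
    (hS : IsSuppHyp n (epi n g) v s α)
    (hmin : ∀ y ∈ Hyp n v s α ∩ epi n g, KMinPt n (epi n g) y) : s < 0 := by
  obtain ⟨-, ⟨q, hqH, hq⟩, hle⟩ := hS
  have hq' : (q.1, q.2 + 1) ∈ epi n g :=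
    le_trans (α := EReal) hq (EReal.coe_le_coe_iff.mpr (by linarith))
  have hs : s ≤ 0 := by
    have := hle _ hq'
    simp only [Hyp, Set.mem_ofPred_eq] at hqH this
    linarith
  refine hs.lt_of_ne fun hs0 => ?_
  have hqH' : (q.1, q.2 + 1) ∈ Hyp n v s α := by
    simp only [Hyp, Set.mem_ofPred_eq, hs0, mul_zero] at hqH ⊢
    exact hqH
  exact kMinPt_iff.mp (hmin _ ⟨hqH', hq'⟩) 1 one_pos (by simpa using hq)

lemma hyp_smul {v : Fin n → ℝ} {s α c : ℝ} (hc : c ≠ 0) :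
    Hyp n (c • v) (c * s) (c * α) = Hyp n v s α := by
  ext p
  simp only [Hyp, Set.mem_ofPred_eq, dotProduct_smul, smul_eq_mul]
  rw [show c * p.1 ⬝ᵥ v + p.2 * (c * s) = c * (p.1 ⬝ᵥ v + p.2 * s) by ring]
  exact mul_right_inj' hc

lemma IsSuppHyp.smul {A : Set ((Fin n → ℝ) × ℝ)} {v : Fin n → ℝ} {s α c : ℝ}
    (h : IsSuppHyp n A v s α) (hc : 0 < c) : IsSuppHyp n A (c • v) (c * s) (c * α) := by
  obtain ⟨hne, hH, hle⟩ := h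
  refine ⟨fun h0 => hne ?_, by rwa [hyp_smul hc.ne'], fun p hp => ?_⟩
  · simp only [Prod.ext_iff, Prod.fst_zero, Prod.snd_zero, smul_eq_zero, mul_eq_zero,
      hc.ne', false_or] at h0 ⊢
    exact h0
  · rw [dotProduct_smul, smul_eq_mul,
      show c * p.1 ⬝ᵥ v + p.2 * (c * s) = c * (p.1 ⬝ᵥ v + p.2 * s) by ring]
    exact mul_le_mul_of_nonneg_left (hle p hp) hc.le

end Hyperplane

section Separation

variable {n : ℕ}

lemma ContinuousLinearMap.exists_eq_dotProduct_add_mul (L : ((Fin n → ℝ) × ℝ) →L[ℝ] ℝ) :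
    ∃ (w : Fin n → ℝ) (c : ℝ), ∀ q : (Fin n → ℝ) × ℝ, L q = q.1 ⬝ᵥ w + q.2 * c := by
  set L₁ : Module.Dual ℝ (Fin n → ℝ) := L.toLinearMap ∘ₗ LinearMap.inl ℝ _ ℝ
  refine ⟨(dotProductEquiv ℝ (Fin n)).symm L₁, L (0, 1), fun q => ?_⟩
  have h₁ := LinearMap.congr_fun ((dotProductEquiv ℝ (Fin n)).apply_symm_apply L₁) q.1
  rw [dotProductEquiv_apply_apply] at h₁
  calc L q = L (q.1, 0) + L (q.2 • (0, 1)) := by rw [← map_add]; simp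
    _ = q.1 ⬝ᵥ (dotProductEquiv ℝ (Fin n)).symm L₁ + q.2 * L (0, 1) := by
      rw [dotProduct_comm, h₁, map_smul, smul_eq_mul]; rfl

lemma exists_dotProduct_separation {A : Set ((Fin n → ℝ) × ℝ)} (hconv : Convex ℝ A)
    (hclosed : IsClosed A) {p : (Fin n → ℝ) × ℝ} (hp : p ∉ A) :
    ∃ (w : Fin n → ℝ) (c γ : ℝ),
      (∀ q ∈ A, q.1 ⬝ᵥ w + q.2 * c < γ) ∧ γ < p.1 ⬝ᵥ w + p.2 * c := by
  obtain ⟨L, γ, hA, hp⟩ := geometric_hahn_banach_closed_point hconv hclosed hp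
  obtain ⟨w, c, hL⟩ := L.exists_eq_dotProduct_add_mul
  exact ⟨w, c, γ, fun q hq => hL q ▸ hA q hq, hL p ▸ hp⟩

end Separation

section FenchelMoreau

variable {n : ℕ} {f : (Fin n → ℝ) → EReal}

lemma exists_conj_le_of_notMem_epi (hdom : ∃ x, f x ≠ ⊤) (hclosed : IsClosed (epi n f))
    (hconv : Convex ℝ (epi n f)) {u₀ : Fin n → ℝ} {r₀ : ℝ} (h₀ : conj n f u₀ ≤ r₀)
    {x : Fin n → ℝ} {β : ℝ} (hx : (x, β) ∉ epi n f) :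
    ∃ (u : Fin n → ℝ) (r : ℝ), conj n f u ≤ r ∧ β < x ⬝ᵥ u - r := by
  obtain ⟨w, c, γ, hA, hxγ⟩ := exists_dotProduct_separation hconv hclosed hx
  -- `epi f` contains a vertical ray, along which the separating functional stays below `γ`.
  have hc : c ≤ 0 := by
    obtain ⟨x₀, hx₀⟩ := hdom
    by_contra! hc
    set d := γ - x₀ ⬝ᵥ w - (f x₀).toReal * c
    have hmem : (x₀, (f x₀).toReal + |d| / c) ∈ epi n f :=
      (EReal.le_coe_toReal hx₀).trans
        (EReal.coe_le_coe_iff.mpr (le_add_of_nonneg_right (by positivity)))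
    have h₁ := hA _ hmem
    have h₂ : |d| / c * c = |d| := div_mul_cancel₀ _ hc.ne'
    linarith [le_abs_self d]
  rcases hc.lt_or_eq with hc | rfl
  · have key : ∀ (y : Fin n → ℝ) (r : ℝ),
        y ⬝ᵥ ((-c)⁻¹ • w) - r = (-c)⁻¹ * (y ⬝ᵥ w + r * c) := by
      intro y r
      rw [dotProduct_smul, smul_eq_mul, mul_add, inv_neg, neg_mul, neg_mul,
        mul_comm r c, ← mul_assoc, inv_mul_cancel₀ hc.ne]
      ring
    have hpos : 0 < (-c)⁻¹ := inv_pos.mpr (neg_pos.mpr hc)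
    refine ⟨(-c)⁻¹ • w, (-c)⁻¹ * γ, conj_le_coe_iff.mpr fun q hq => ?_, ?_⟩
    · rw [key]
      exact mul_le_mul_of_nonneg_left (hA q hq).le hpos.le
    · linarith [key x β, mul_lt_mul_of_pos_left hxγ hpos]
  -- A vertical separating hyperplane: tilt the affine minorant `u₀` by a large multiple of `w`.
  · set D := x ⬝ᵥ w - γ
    have hD : 0 < D := by simp only [mul_zero, add_zero] at hxγ; linarith
    set d := β - (x ⬝ᵥ u₀ - r₀)
    set t := (|d| + 1) / D
    have ht : 0 ≤ t := by positivity
    refine ⟨u₀ + t • w, r₀ + t * γ, conj_le_coe_iff.mpr fun q hq => ?_, ?_⟩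
    · have h₁ := conj_le_coe_iff.mp h₀ q hq
      have h₂ : t * (q.1 ⬝ᵥ w) ≤ t * γ := by
        have := hA q hq
        simp only [mul_zero, add_zero] at this
        exact mul_le_mul_of_nonneg_left this.le ht
      rw [dotProduct_add, dotProduct_smul, smul_eq_mul]
      linarith
    · have h₁ : t * D = |d| + 1 := div_mul_cancel₀ _ hD.ne'
      rw [dotProduct_add, dotProduct_smul, smul_eq_mul]
      linarith [le_abs_self d]

lemma eq_of_isSuppHyp_epi_conj (hdom : ∃ x, f x ≠ ⊤) (hclosed : IsClosed (epi n f))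
    (hconv : Convex ℝ (epi n f)) {x : Fin n → ℝ} {β : ℝ}
    (hS : IsSuppHyp n (epi n (conj n f)) x (-1) β) : f x = β := by
  obtain ⟨-, ⟨q, hqH, hq⟩, hle⟩ := hS
  have hqβ : x ⬝ᵥ q.1 - q.2 = β := by
    simp only [Hyp, Set.mem_ofPred_eq, dotProduct_comm q.1] at hqH
    linarith
  apply le_antisymm
  · by_contra hgt
    obtain ⟨u, r, hur, hlt⟩ := exists_conj_le_of_notMem_epi hdom hclosed hconv hq hgt
    have := hle (u, r) hur
    rw [dotProduct_comm] at this
    linarith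
  · refine EReal.coe_le_iff_forall_le_coe.mpr fun b hb => ?_
    have := conj_le_coe_iff.mp hq (x, b) hb
    linarith

end FenchelMoreau

theorem stmt4_general (n : ℕ) (f : (Fin n → ℝ) → EReal)
    (hdom : ∃ x, f x ≠ ⊤) (hbot : ∀ x, f x ≠ ⊥)
    (hclosed : IsClosed (epi n f)) (hconv : Convex ℝ (epi n f))
    (Fs : Set ((Fin n → ℝ) × ℝ)) :
    IsKMinExpFace n (epi n (conj n f)) Fs ↔
      ∃ xb : Fin n → ℝ, f xb ≠ ⊤ ∧ (subdiff n f xb).Nonempty ∧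
        Fs = {q : (Fin n → ℝ) × ℝ | (q.2 : EReal) = conj n f q.1 ∧ q.1 ∈ subdiff n f xb} := by
  constructor
  · rintro ⟨⟨v, s, α, hS, rfl⟩, hmin⟩
    have hs : s < 0 := hS.snd_neg_of_kMinPt hmin
    have hc : 0 < (-s)⁻¹ := inv_pos.mpr (neg_pos.mpr hs)
    have hcs : (-s)⁻¹ * s = -1 := by rw [inv_neg, neg_mul, inv_mul_cancel₀ hs.ne]
    have hS' := hS.smul hc
    rw [hcs] at hS'
    rw [← hyp_smul hc.ne', hcs]
    have hfx := eq_of_isSuppHyp_epi_conj hdom hclosed hconv hS'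
    obtain ⟨q, hq⟩ := hS'.2.1
    rw [← graph_conj_subdiff_eq_hyp_inter_epi hfx] at hq ⊢
    exact ⟨_, hfx ▸ EReal.coe_ne_top _, ⟨q.1, hq.2⟩, rfl⟩
  · rintro ⟨x, hx, hne, rfl⟩
    have ha : f x = (f x).toReal := (EReal.coe_toReal hx (hbot x)).symm
    rw [graph_conj_subdiff_eq_hyp_inter_epi ha]
    refine ⟨⟨x, -1, _, isSuppHyp_epi_conj ha hne, rfl⟩, fun y hy => ?_⟩
    rw [← graph_conj_subdiff_eq_hyp_inter_epi ha] at hy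
    exact (kMinPt_epi_iff hy.1.ge).mpr hy.1

/-- F* ⊆ epi f* is a K-minimal exposed face of epi f* iff
F* = {(u,f*(u)) : u ∈ ∂f(x̄)} for some x̄ ∈ dom f with ∂f(x̄) ≠ ∅. -/
theorem stmt4 (n : ℕ) (f : (Fin n → ℝ) → EReal)
    (hdom : ∃ x, f x ≠ ⊤) (hbot : ∀ x, f x ≠ ⊥)
    (hclosed : IsClosed (epi n f)) (hconv : Convex ℝ (epi n f))
    (Fs : Set ((Fin n → ℝ) × ℝ)) (hFs : Fs ⊆ epi n (conj n f)) :
    IsKMinExpFace n (epi n (conj n f)) Fs ↔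
      ∃ xb : Fin n → ℝ, f xb ≠ ⊤ ∧ (subdiff n f xb).Nonempty ∧
        Fs = {q : (Fin n → ℝ) × ℝ | (q.2 : EReal) = conj n f q.1 ∧ q.1 ∈ subdiff n f xb} :=
  stmt4_general n f hdom hbot hclosed hconv Fs
end
end

section
/- Let f be the polyhedral convex function f(x) = max_{i=1,…,m}(⟨a_i,x⟩ − b_i) + δ_D(x) with D = {x : ⟨a_j,x⟩ ≤ b_j, j = m+1,…,l}, let x ∈ D and u ∈ ∂f(x). Then the set K(x,u) := {w ∈ T_D(x) : ⟨u,w⟩ = max_{i ∈ I(x)} ⟨a_i,w⟩} coincides with the set {w ∈ ℝⁿ : ∃ t̄ > 0 such that for all t ∈ (0, t̄), u ∈ ∂f(x + t w)}. -/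
open Matrix Set
open scoped Classical

noncomputable section

/-- The polyhedral feasible set D = {x : ⟨c_j, x⟩ ≤ d_j, j = 1,…,l}. -/
def Dset (n l : ℕ) (c : Fin l → Fin n → ℝ) (d : Fin l → ℝ) : Set (Fin n → ℝ) :=
  {x | ∀ j, c j ⬝ᵥ x ≤ d j}

/-- max_{i=1,…,m} (⟨a_i, x⟩ − b_i). -/
def maxAff (n m : ℕ) (a : Fin m → Fin n → ℝ) (b : Fin m → ℝ) (x : Fin n → ℝ) : ℝ :=
  ⨆ i : Fin m, (a i ⬝ᵥ x - b i)

/-- The polyhedral convex function f(x) = max_{i=1,…,m}(⟨a_i,x⟩ − b_i) + δ_D(x). -/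
def fpoly (n m l : ℕ) (a : Fin m → Fin n → ℝ) (b : Fin m → ℝ)
    (c : Fin l → Fin n → ℝ) (d : Fin l → ℝ) (x : Fin n → ℝ) : EReal :=
  if x ∈ Dset n l c d then ((maxAff n m a b x : ℝ) : EReal) else ⊤

/-- The active index set I(x) = {i : f(x) = ⟨a_i,x⟩ − b_i}. -/
def Iact (n m l : ℕ) (a : Fin m → Fin n → ℝ) (b : Fin m → ℝ)
    (c : Fin l → Fin n → ℝ) (d : Fin l → ℝ) (x : Fin n → ℝ) : Set (Fin m) :=
  {i | fpoly n m l a b c d x = ((a i ⬝ᵥ x - b i : ℝ) : EReal)}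

/-- The active constraint set J(x) = {j : ⟨a_j,x⟩ = b_j}. -/
def Jact (n l : ℕ) (c : Fin l → Fin n → ℝ) (d : Fin l → ℝ) (x : Fin n → ℝ) : Set (Fin l) :=
  {j | c j ⬝ᵥ x = d j}

/-- The tangent cone T_D(x) = {w : ⟨a_j,w⟩ ≤ 0 for all j ∈ J(x)}. -/
def Tcone (n l : ℕ) (c : Fin l → Fin n → ℝ) (d : Fin l → ℝ) (x : Fin n → ℝ) :
    Set (Fin n → ℝ) :=
  {w | ∀ j ∈ Jact n l c d x, c j ⬝ᵥ w ≤ 0}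

/-- I′(x,w) = {i ∈ I(x) : ⟨a_i,w⟩ = max_{j ∈ I(x)} ⟨a_j,w⟩}. -/
def Iact' (n m l : ℕ) (a : Fin m → Fin n → ℝ) (b : Fin m → ℝ)
    (c : Fin l → Fin n → ℝ) (d : Fin l → ℝ) (x w : Fin n → ℝ) : Set (Fin m) :=
  {i ∈ Iact n m l a b c d x |
    a i ⬝ᵥ w = sSup ((fun j => a j ⬝ᵥ w) '' Iact n m l a b c d x)}

/-- J′(x,w) = {j ∈ J(x) : ⟨a_j,w⟩ = 0}. -/
def Jact' (n l : ℕ) (c : Fin l → Fin n → ℝ) (d : Fin l → ℝ) (x w : Fin n → ℝ) :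
    Set (Fin l) :=
  {j ∈ Jact n l c d x | c j ⬝ᵥ w = 0}

/-!
For `w ∈ T_D(x)` and small `t > 0`, the point `x + t • w` stays in `D` and only the indices active
at `x` can attain the maximum, so `f (x + t • w) = f x + t * σ w` with
`σ w = max_{i ∈ I(x)} ⟨a_i, w⟩`. Testing the subgradient inequality of `u` at `x` against
`x + t • w` and vice versa then says exactly `⟨u, w⟩ = σ w`. Conversely `u ∈ ∂f(x + t • w)`
forces `x + t • w ∈ D`, hence `w ∈ T_D(x)`.
-/

open Filter Topology

lemma eventually_forall_add_mul_nonpos {ι : Type*} [Finite ι] {α β : ι → ℝ}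
    (hα : ∀ i, α i ≤ 0) (hβ : ∀ i, α i = 0 → β i ≤ 0) :
    ∀ᶠ t in 𝓝[>] (0 : ℝ), ∀ i, α i + t * β i ≤ 0 := by
  refine eventually_all.2 fun i => (hα i).lt_or_eq.elim (fun hneg => ?_) fun hzero => ?_
  · have hlim : Tendsto (fun t : ℝ => α i + t * β i) (𝓝[>] 0) (𝓝 (α i)) :=
      ((by fun_prop : Continuous fun t : ℝ => α i + t * β i).tendsto' 0 (α i) (by simp)).mono_left
        nhdsWithin_le_nhds
    exact (hlim.eventually_lt_const hneg).mono fun t ht => ht.le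
  · refine eventually_nhdsWithin_of_forall fun t (ht : 0 < t) => ?_
    rw [hzero, zero_add]
    exact mul_nonpos_of_nonneg_of_nonpos ht.le (hβ i hzero)

lemma eventually_ciSup_add_mul_eq {ι : Type*} [Finite ι] (α β : ι → ℝ) :
    ∀ᶠ t in 𝓝[>] (0 : ℝ), ⨆ i, (α i + t * β i) =
      (⨆ i, α i) + t * sSup (β '' {i | α i = ⨆ j, α j}) := by
  cases isEmpty_or_nonempty ι
  · simp [Real.iSup_of_isEmpty, Set.eq_empty_of_isEmpty]
  set M := ⨆ i, α i
  set I := {i | α i = M}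
  set σ := sSup (β '' I)
  have hσ_ge : ∀ i ∈ I, β i ≤ σ := fun i hi =>
    le_csSup (Set.toFinite _).bddAbove ⟨i, hi, rfl⟩
  obtain ⟨i₀, hi₀I, hi₀σ⟩ : σ ∈ β '' I := by
    obtain ⟨i, hi⟩ := exists_eq_ciSup_of_finite (f := α)
    exact (Set.Nonempty.image β ⟨i, hi⟩).csSup_mem (Set.toFinite _)
  have hbound : ∀ᶠ t in 𝓝[>] (0 : ℝ), ∀ i, (α i - M) + t * (β i - σ) ≤ 0 :=
    eventually_forall_add_mul_nonpos
      (fun i => sub_nonpos.2 (le_ciSup (Finite.bddAbove_range α) i))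
      fun i hi => sub_nonpos.2 (hσ_ge i (sub_eq_zero.1 hi))
  refine hbound.mono fun t ht => le_antisymm (ciSup_le fun i => by linarith [ht i]) ?_
  calc M + t * σ = α i₀ + t * β i₀ := by rw [hi₀I, hi₀σ]
    _ ≤ ⨆ i, (α i + t * β i) :=
      le_ciSup (f := fun i => α i + t * β i) (Finite.bddAbove_range _) i₀

section Polyhedral

variable {n m l : ℕ} {a : Fin m → Fin n → ℝ} {b : Fin m → ℝ}
  {c : Fin l → Fin n → ℝ} {d : Fin l → ℝ} {x w : Fin n → ℝ}

lemma Iact_eq_of_mem_Dset (hx : x ∈ Dset n l c d) :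
    Iact n m l a b c d x = {i | a i ⬝ᵥ x - b i = maxAff n m a b x} := by
  ext i
  simp only [Iact, fpoly, if_pos hx, Set.mem_ofPred_eq, EReal.coe_eq_coe_iff, eq_comm]

lemma mem_Tcone_of_add_smul_mem_Dset {t : ℝ} (ht : 0 < t) (hxw : x + t • w ∈ Dset n l c d) :
    w ∈ Tcone n l c d x := by
  intro j (hj : c j ⬝ᵥ x = d j)
  have := hxw j
  rw [dotProduct_add, dotProduct_smul, smul_eq_mul, hj] at this
  nlinarith

lemma eventually_add_smul_mem_Dset (hx : x ∈ Dset n l c d) (hw : w ∈ Tcone n l c d x) :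
    ∀ᶠ t in 𝓝[>] (0 : ℝ), x + t • w ∈ Dset n l c d := by
  refine (eventually_forall_add_mul_nonpos (α := fun j => c j ⬝ᵥ x - d j) (β := fun j => c j ⬝ᵥ w)
    (fun j => sub_nonpos.2 (hx j)) fun j hj => hw j (sub_eq_zero.1 hj)).mono fun t ht j => ?_
  rw [dotProduct_add, dotProduct_smul, smul_eq_mul]
  linarith [ht j]

lemma eventually_maxAff_add_smul (a : Fin m → Fin n → ℝ) (b : Fin m → ℝ) (x w : Fin n → ℝ) :
    ∀ᶠ t in 𝓝[>] (0 : ℝ), maxAff n m a b (x + t • w) = maxAff n m a b x +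
      t * sSup ((fun i => a i ⬝ᵥ w) '' {i | a i ⬝ᵥ x - b i = maxAff n m a b x}) := by
  have hsplit : ∀ t : ℝ, maxAff n m a b (x + t • w) = ⨆ i, ((a i ⬝ᵥ x - b i) + t * a i ⬝ᵥ w) :=
    fun t => by simp only [maxAff, dotProduct_add, dotProduct_smul, smul_eq_mul, add_sub_right_comm]
  exact (eventually_ciSup_add_mul_eq (fun i => a i ⬝ᵥ x - b i) (a · ⬝ᵥ w)).mono fun t ht =>
    (hsplit t).trans ht

/-- As `f = ⊤` off `D ≠ ∅`, subgradients exist only at points of `D`. -/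
lemma mem_subdiff_fpoly_iff (hD : (Dset n l c d).Nonempty) {u y : Fin n → ℝ} :
    u ∈ subdiff n (fpoly n m l a b c d) y ↔ y ∈ Dset n l c d ∧
      ∀ z ∈ Dset n l c d, maxAff n m a b y + u ⬝ᵥ (z - y) ≤ maxAff n m a b z := by
  constructor
  · intro hu
    have hy : y ∈ Dset n l c d := by
      by_contra hy
      obtain ⟨z, hz⟩ := hD
      have := hu z
      simp only [fpoly, if_neg hy, if_pos hz, EReal.top_add_coe, top_le_iff] at this
      exact EReal.coe_ne_top _ this
    refine ⟨hy, fun z hz => ?_⟩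
    simpa only [fpoly, if_pos hy, if_pos hz, ← EReal.coe_add, EReal.coe_le_coe_iff] using hu z
  · rintro ⟨hy, hu⟩ z
    by_cases hz : z ∈ Dset n l c d
    · simp only [fpoly, if_pos hy, if_pos hz, ← EReal.coe_add, EReal.coe_le_coe_iff]
      exact hu z hz
    · simp [fpoly, hz]

end Polyhedral

theorem stmt7_general (n m l : ℕ)
    (a : Fin m → Fin n → ℝ) (b : Fin m → ℝ)
    (c : Fin l → Fin n → ℝ) (d : Fin l → ℝ)
    (x : Fin n → ℝ) (hx : x ∈ Dset n l c d)
    (u : Fin n → ℝ) (hu : u ∈ subdiff n (fpoly n m l a b c d) x) :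
    {w : Fin n → ℝ | w ∈ Tcone n l c d x ∧
        u ⬝ᵥ w = sSup ((fun i => a i ⬝ᵥ w) '' Iact n m l a b c d x)} =
      {w : Fin n → ℝ | ∃ tb > (0 : ℝ), ∀ t ∈ Set.Ioo (0 : ℝ) tb,
        u ∈ subdiff n (fpoly n m l a b c d) (x + t • w)} := by
  have hD : (Dset n l c d).Nonempty := ⟨x, hx⟩
  simp only [mem_subdiff_fpoly_iff hD] at hu ⊢
  ext w
  rw [Set.mem_ofPred_eq, Set.mem_ofPred_eq, ← (nhdsGT_basis 0).eventually_iff,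
    Iact_eq_of_mem_Dset hx]
  constructor
  · rintro ⟨hw, huw⟩
    filter_upwards [eventually_add_smul_mem_Dset hx hw, eventually_maxAff_add_smul a b x w]
      with t hxt hmax
    refine ⟨hxt, fun z hz => ?_⟩
    have := hu.2 z hz
    rw [hmax, ← huw, sub_add_eq_sub_sub, dotProduct_sub, dotProduct_smul, smul_eq_mul]
    linarith
  · intro hsub
    obtain ⟨t, ⟨⟨hxt, hut⟩, hmax⟩, ht⟩ :=
      (hsub.and (eventually_maxAff_add_smul a b x w)).and self_mem_nhdsWithin |>.exists
    refine ⟨mem_Tcone_of_add_smul_mem_Dset ht hxt, ?_⟩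
    have h₁ := hu.2 _ hxt
    have h₂ := hut x hu.1
    rw [add_sub_cancel_left, dotProduct_smul, smul_eq_mul, hmax] at h₁
    rw [sub_add_cancel_left, dotProduct_neg, dotProduct_smul, smul_eq_mul, hmax] at h₂
    nlinarith

/-- for x ∈ D and u ∈ ∂f(x), the set
K(x,u) = {w ∈ T_D(x) : ⟨u,w⟩ = max_{i ∈ I(x)} ⟨a_i,w⟩} coincides with
{w : ∃ t̄ > 0 with u ∈ ∂f(x+tw) for all t ∈ (0,t̄)}. -/
theorem stmt7 (n m l : ℕ) (hm : 0 < m)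
    (a : Fin m → Fin n → ℝ) (b : Fin m → ℝ)
    (c : Fin l → Fin n → ℝ) (d : Fin l → ℝ)
    (x : Fin n → ℝ) (hx : x ∈ Dset n l c d)
    (u : Fin n → ℝ) (hu : u ∈ subdiff n (fpoly n m l a b c d) x) :
    {w : Fin n → ℝ | w ∈ Tcone n l c d x ∧
        u ⬝ᵥ w = sSup ((fun i => a i ⬝ᵥ w) '' Iact n m l a b c d x)} =
      {w : Fin n → ℝ | ∃ tb > (0 : ℝ), ∀ t ∈ Set.Ioo (0 : ℝ) tb,
        u ∈ subdiff n (fpoly n m l a b c d) (x + t • w)} :=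
  stmt7_general n m l a b c d x hx u hu
end
end

section
/- Let f be a proper closed polyhedral convex function on ℝⁿ, let F* be a K-minimal exposed face of epi f*, and let Ψ(F*) := ⋂_{(u,f*(u)) ∈ F*} {(x,f(x)) : u ∈ ∂f(x)}. If (ū, f*(ū)) lies in the relative interior of F* and (x̄, f(x̄)) lies in the relative interior of Ψ(F*), then the set S := {w ∈ ℝⁿ : ∃ t̄ > 0 such that for all t ∈ (0, t̄), ū ∈ ∂f(x̄ + t w)} is a linear subspace of ℝⁿ with dim S = dim Ψ(F*). -/
open Matrix Set
open scoped Pointwise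

noncomputable section

/-- A is a polyhedral subset of ℝⁿ × ℝ (finite intersection of half-spaces). -/
def IsPolyhedral (n : ℕ) (A : Set ((Fin n → ℝ) × ℝ)) : Prop :=
  ∃ (N : ℕ) (u : Fin N → Fin n → ℝ) (s β : Fin N → ℝ),
    A = {p | ∀ i, p.1 ⬝ᵥ u i + p.2 * s i ≤ β i}

/-- The dimension of a convex subset of ℝⁿ × ℝ: the dimension of its affine hull. -/
def dimSet (n : ℕ) (F : Set ((Fin n → ℝ) × ℝ)) : ℕ :=
  Module.finrank ℝ (affineSpan ℝ F).direction

/-!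
Let `D = {x | ū ∈ ∂f x}`. By Fenchel–Young, `ū ∈ ∂f x` means `f x = ⟨x, ū⟩ - f* ū`, and the
relative interior position of `(ū, f* ū)` in `F*` forces every `u` with `(u, f* u) ∈ F*` into
`∂f x` as well, so `Ψ(F*)` is the graph of `x ↦ ⟨x, ū⟩ - f* ū` over the convex set `D`.
Since `(x̄, f x̄)` is relatively interior in this graph, every segment of `D` through `x̄` extends
beyond `x̄`; hence the directions `w` with `x̄ + t w ∈ D` for small `t > 0` are closed under
negation and form the direction space of `aff D`, whose dimension is that of its graph `Ψ(F*)`.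
-/

open Filter Topology

theorem exists_add_smul_sub_mem_of_mem_intrinsicInterior {E : Type*} [AddCommGroup E]
    [Module ℝ E] [TopologicalSpace E] [IsTopologicalAddGroup E] [ContinuousSMul ℝ E]
    {s : Set E} {a b : E} (ha : a ∈ intrinsicInterior ℝ s) (hb : b ∈ s) :
    ∃ ε > (0 : ℝ), a + ε • (a - b) ∈ s := by
  obtain ⟨y, hy, rfl⟩ := mem_intrinsicInterior.1 ha
  have hline : ∀ t : ℝ, (y : E) + t • ((y : E) - b) ∈ affineSpan ℝ s := fun t => by
    rw [add_comm]
    exact AffineSubspace.vadd_mem_of_mem_direction (Submodule.smul_mem _ t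
      (AffineSubspace.vsub_mem_direction y.2 (subset_affineSpan ℝ s hb))) y.2
  let g : ℝ → affineSpan ℝ s := fun t => ⟨y + t • (y - b), hline t⟩
  have hg : Continuous g := by fun_prop
  have hnear : ∀ᶠ t in 𝓝 (0 : ℝ), g t ∈ ((↑) ⁻¹' s : Set (affineSpan ℝ s)) :=
    hg.continuousAt.preimage_mem_nhds (by simpa [g] using mem_interior_iff_mem_nhds.1 hy)
  obtain ⟨ε, hεs, hε⟩ :=
    ((hnear.filter_mono nhdsWithin_le_nhds).and (self_mem_nhdsWithin (s := Ioi 0))).exists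
  exact ⟨ε, hε, hεs⟩

theorem IsMaxOn.eq_of_mem_intrinsicInterior {E : Type*} [AddCommGroup E] [Module ℝ E]
    [TopologicalSpace E] [IsTopologicalAddGroup E] [ContinuousSMul ℝ E]
    {ℓ : E →ₗ[ℝ] ℝ} {s : Set E} {a b : E} (hℓ : IsMaxOn ℓ s a)
    (ha : a ∈ intrinsicInterior ℝ s) (hb : b ∈ s) : ℓ b = ℓ a := by
  obtain ⟨ε, hε, hc⟩ := exists_add_smul_sub_mem_of_mem_intrinsicInterior ha hb
  have hca := isMaxOn_iff.1 hℓ _ hc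
  simp only [map_add, map_smul, map_sub, smul_eq_mul] at hca
  exact le_antisymm (isMaxOn_iff.1 hℓ b hb) (by nlinarith)

section FeasibleDirections

variable {E : Type*} [AddCommGroup E] [Module ℝ E] {D : Set E} {x w : E}

def feasibleDirections (D : Set E) (x : E) : Set E := {w | ∃ ε > (0 : ℝ), x + ε • w ∈ D}

theorem smul_mem_feasibleDirections {c : ℝ} (hc : 0 < c) (hw : w ∈ feasibleDirections D x) :
    c • w ∈ feasibleDirections D x := by
  obtain ⟨ε, hε, h⟩ := hw
  refine ⟨ε / c, by positivity, ?_⟩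
  rwa [smul_smul, div_mul_cancel₀ ε hc.ne']

theorem Convex.add_smul_mem_of_le (hD : Convex ℝ D) (hx : x ∈ D) {ε t : ℝ}
    (h : x + ε • w ∈ D) (ht : 0 ≤ t) (htε : t ≤ ε) : x + t • w ∈ D := by
  rcases ht.eq_or_lt with rfl | ht
  · simpa using hx
  have hε : 0 < ε := ht.trans_le htε
  have := hD.add_smul_mem hx h ⟨div_nonneg ht.le hε.le, div_le_one_of_le₀ htε hε.le⟩
  rwa [smul_smul, div_mul_cancel₀ t hε.ne'] at this

theorem Convex.mem_feasibleDirections_iff (hD : Convex ℝ D) (hx : x ∈ D) :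
    w ∈ feasibleDirections D x ↔ ∃ tb > (0 : ℝ), ∀ t ∈ Ioo (0 : ℝ) tb, x + t • w ∈ D := by
  constructor
  · rintro ⟨ε, hε, h⟩
    exact ⟨ε, hε, fun t ht => hD.add_smul_mem_of_le hx h ht.1.le ht.2.le⟩
  · rintro ⟨tb, htb, h⟩
    exact ⟨tb / 2, by positivity, h _ ⟨by positivity, by linarith⟩⟩

theorem Convex.add_mem_feasibleDirections (hD : Convex ℝ D) (hx : x ∈ D) {w₁ w₂ : E}
    (h₁ : w₁ ∈ feasibleDirections D x) (h₂ : w₂ ∈ feasibleDirections D x) :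
    w₁ + w₂ ∈ feasibleDirections D x := by
  obtain ⟨ε₁, hε₁, h₁⟩ := h₁
  obtain ⟨ε₂, hε₂, h₂⟩ := h₂
  set μ := min ε₁ ε₂
  have hμ : 0 < μ := lt_min hε₁ hε₂
  have h₁' := hD.add_smul_mem_of_le hx h₁ hμ.le (min_le_left _ _)
  have h₂' := hD.add_smul_mem_of_le hx h₂ hμ.le (min_le_right _ _)
  refine ⟨μ / 2, by positivity, ?_⟩
  convert hD h₁' h₂' (a := 1 / 2) (b := 1 / 2) (by norm_num) (by norm_num) (by norm_num)
    using 1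
  module

theorem neg_mem_feasibleDirections (hpush : ∀ y ∈ D, ∃ ε > (0 : ℝ), x + ε • (x - y) ∈ D)
    (hw : w ∈ feasibleDirections D x) : -w ∈ feasibleDirections D x := by
  obtain ⟨ε, hε, h⟩ := hw
  obtain ⟨δ, hδ, h'⟩ := hpush _ h
  refine ⟨δ * ε, by positivity, ?_⟩
  convert h' using 2
  module

theorem Convex.feasibleDirections_eq_direction (hD : Convex ℝ D) (hx : x ∈ D)
    (hpush : ∀ y ∈ D, ∃ ε > (0 : ℝ), x + ε • (x - y) ∈ D) :
    feasibleDirections D x = (affineSpan ℝ D).direction := by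
  let C : Submodule ℝ E :=
    { carrier := feasibleDirections D x
      zero_mem' := ⟨1, one_pos, by simpa using hx⟩
      add_mem' := hD.add_mem_feasibleDirections hx
      smul_mem' := fun c w hw => by
        rcases lt_trichotomy c 0 with hc | rfl | hc
        · simpa using smul_mem_feasibleDirections (neg_pos.2 hc)
            (neg_mem_feasibleDirections hpush hw)
        · exact ⟨1, one_pos, by simpa using hx⟩
        · exact smul_mem_feasibleDirections hc hw }
  apply Set.Subset.antisymm
  · rintro w ⟨ε, hε, h⟩
    have hεw : ε • w ∈ (affineSpan ℝ D).direction := by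
      simpa using AffineSubspace.vsub_mem_direction (subset_affineSpan ℝ D h)
        (subset_affineSpan ℝ D hx)
    simpa [smul_smul, inv_mul_cancel₀ hε.ne'] using Submodule.smul_mem _ ε⁻¹ hεw
  · change ((affineSpan ℝ D).direction : Set E) ⊆ C
    rw [direction_affineSpan, vectorSpan_eq_span_vsub_set_right ℝ hx, SetLike.coe_subset_coe,
      Submodule.span_le]
    rintro _ ⟨y, hy, rfl⟩
    exact ⟨1, one_pos, by simpa using hy⟩

end FeasibleDirections

theorem IsPolyhedral.convex {n : ℕ} {A : Set ((Fin n → ℝ) × ℝ)} (hA : IsPolyhedral n A) :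
    Convex ℝ A := by
  obtain ⟨N, u, s, β, rfl⟩ := hA
  simp only [ofPred_forall]
  refine convex_iInter fun i => convex_halfSpace_le ⟨fun p q => ?_, fun c p => ?_⟩ (β i)
  · simp only [Prod.fst_add, Prod.snd_add, add_dotProduct]
    ring
  · simp only [Prod.smul_fst, Prod.smul_snd, smul_dotProduct, smul_eq_mul]
    ring

theorem IsExpFace.subset {n : ℕ} {A E : Set ((Fin n → ℝ) × ℝ)} (hE : IsExpFace n A E) :
    E ⊆ A := by
  obtain ⟨_, _, _, _, rfl⟩ := hE
  exact inter_subset_right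

section Conjugate

variable {n : ℕ} {f : (Fin n → ℝ) → EReal} {u x : Fin n → ℝ} {r : ℝ}

theorem dotProduct_sub_le_conj (f : (Fin n → ℝ) → EReal) (u x : Fin n → ℝ) :
    ((x ⬝ᵥ u : ℝ) : EReal) - f x ≤ conj n f u :=
  le_iSup (fun x => ((x ⬝ᵥ u : ℝ) : EReal) - f x) x

theorem coe_sub_le_of_coe_eq_conj (hfx : f x ≠ ⊥) (hr : (r : EReal) = conj n f u) :
    ((x ⬝ᵥ u - r : ℝ) : EReal) ≤ f x := by
  have h := dotProduct_sub_le_conj f u x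
  rw [← hr] at h
  generalize f x = y at hfx h ⊢
  induction y using EReal.rec with
  | bot => exact absurd rfl hfx
  | coe v =>
    have : x ⬝ᵥ u - v ≤ r := by exact_mod_cast h
    exact_mod_cast (by linarith : x ⬝ᵥ u - r ≤ v)
  | top => exact le_top

theorem conj_ne_bot (hdom : ∃ x, f x ≠ ⊤) (hbot : ∀ x, f x ≠ ⊥) (u : Fin n → ℝ) :
    conj n f u ≠ ⊥ := by
  obtain ⟨x₀, hx₀⟩ := hdom
  refine ne_bot_of_le_ne_bot ?_ (dotProduct_sub_le_conj f u x₀)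
  rw [← EReal.coe_toReal hx₀ (hbot x₀), ← EReal.coe_sub]
  exact EReal.coe_ne_bot _

theorem mem_subdiff_iff_of_coe_eq_conj (hdom : ∃ x, f x ≠ ⊤) (hbot : ∀ x, f x ≠ ⊥)
    (hr : (r : EReal) = conj n f u) : u ∈ subdiff n f x ↔ f x = ((x ⬝ᵥ u - r : ℝ) : EReal) := by
  constructor
  · intro h
    have hfx : f x ≠ ⊤ := by
      obtain ⟨x₀, hx₀⟩ := hdom
      intro htop
      have := h x₀
      rw [htop, EReal.top_add_of_ne_bot (EReal.coe_ne_bot _), top_le_iff] at this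
      exact hx₀ this
    obtain ⟨v, hv⟩ : ∃ v : ℝ, f x = v := ⟨_, (EReal.coe_toReal hfx (hbot x)).symm⟩
    have hconj : conj n f u ≤ ((x ⬝ᵥ u - v : ℝ) : EReal) := by
      refine iSup_le fun x' => ?_
      have hx' := h x'
      rw [hv, ← EReal.coe_add] at hx'
      calc ((x' ⬝ᵥ u : ℝ) : EReal) - f x'
          ≤ ((x' ⬝ᵥ u : ℝ) : EReal) - ((v + u ⬝ᵥ (x' - x) : ℝ) : EReal) :=
            EReal.sub_le_sub le_rfl hx'
        _ = ((x ⬝ᵥ u - v : ℝ) : EReal) := by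
            rw [← EReal.coe_sub, dotProduct_sub, dotProduct_comm u x', dotProduct_comm u x]
            ring_nf
    have hrv : r ≤ x ⬝ᵥ u - v := by exact_mod_cast hr ▸ hconj
    have hvr : x ⬝ᵥ u - r ≤ v := by exact_mod_cast hv ▸ coe_sub_le_of_coe_eq_conj (hbot x) hr
    rw [hv]
    congr 1
    linarith
  · intro h x'
    calc f x + ((u ⬝ᵥ (x' - x) : ℝ) : EReal) = ((x' ⬝ᵥ u - r : ℝ) : EReal) := by
          rw [h, ← EReal.coe_add, dotProduct_sub, dotProduct_comm u x', dotProduct_comm u x]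
          ring_nf
      _ ≤ f x' := coe_sub_le_of_coe_eq_conj (hbot x') hr

/-- A `K`-minimal point of `epi f*` lies on the graph of `f*`: otherwise moving it straight
down would stay in the epigraph. -/
theorem coe_eq_conj_of_kMinPt (hdom : ∃ x, f x ≠ ⊤) (hbot : ∀ x, f x ≠ ⊥)
    {q : (Fin n → ℝ) × ℝ} (hq : q ∈ epi n (conj n f)) (hmin : KMinPt n (epi n (conj n f)) q) :
    (q.2 : EReal) = conj n f q.1 := by
  refine (eq_of_le_of_not_lt hq fun hlt => ?_).symm
  set c := (conj n f q.1).toReal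
  have hc : (c : EReal) = conj n f q.1 := EReal.coe_toReal hlt.ne_top (conj_ne_bot hdom hbot _)
  have hcq : c < q.2 := by exact_mod_cast hc ▸ hlt
  have hbelow : (q.1, c) ∈ ({q} - (Kcone n \ -Kcone n)) ∩ epi n (conj n f) := by
    refine ⟨mem_sub.2 ⟨q, rfl, (0, q.2 - c), ⟨⟨rfl, by linarith⟩, fun hneg => ?_⟩,
      Prod.ext (sub_zero q.1) (sub_sub_cancel q.2 c)⟩, hc.ge⟩
    have hneg₂ := hneg.2
    simp only [Prod.snd_neg] at hneg₂
    linarith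
  rw [hmin] at hbelow
  exact hbelow

end Conjugate

section Graph

variable {n : ℕ}

def graphMap (u : Fin n → ℝ) (r : ℝ) : (Fin n → ℝ) →ᵃ[ℝ] (Fin n → ℝ) × ℝ where
  toFun x := (x, x ⬝ᵥ u - r)
  linear := LinearMap.id.prod (dotProductBilin ℝ ℝ u)
  map_vadd' p v := by
    ext
    · rfl
    · show (v + p) ⬝ᵥ u - r = u ⬝ᵥ v + (p ⬝ᵥ u - r)
      rw [add_dotProduct, dotProduct_comm u v]
      ring

@[simp]
theorem graphMap_apply (u x : Fin n → ℝ) (r : ℝ) : graphMap u r x = (x, x ⬝ᵥ u - r) := rfl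

theorem dimSet_image_graphMap (u : Fin n → ℝ) (r : ℝ) (D : Set (Fin n → ℝ)) :
    dimSet n (graphMap u r '' D) = Module.finrank ℝ (affineSpan ℝ D).direction := by
  have hinj : Function.Injective (graphMap u r).linear := fun a b h => congrArg Prod.fst h
  rw [dimSet, ← AffineSubspace.map_span, AffineSubspace.map_direction]
  exact (Submodule.equivMapOfInjective _ hinj _).finrank_eq.symm

theorem mem_and_exists_add_smul_sub_mem_of_mem_intrinsicInterior_image_graphMap
    {u x : Fin n → ℝ} {r s : ℝ} {D : Set (Fin n → ℝ)}
    (h : (x, s) ∈ intrinsicInterior ℝ (graphMap u r '' D)) :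
    x ∈ D ∧ ∀ y ∈ D, ∃ ε > (0 : ℝ), x + ε • (x - y) ∈ D := by
  obtain ⟨x', hx', hx'x⟩ := intrinsicInterior_subset h
  obtain rfl : x' = x := congrArg Prod.fst hx'x
  refine ⟨hx', fun y hy => ?_⟩
  obtain ⟨ε, hε, z, hz, hzeq⟩ :=
    exists_add_smul_sub_mem_of_mem_intrinsicInterior h (mem_image_of_mem _ hy)
  have hz' : z = x' + ε • (x' - y) := congrArg Prod.fst hzeq
  exact ⟨ε, hε, hz' ▸ hz⟩

variable {f : (Fin n → ℝ) → EReal} {u : Fin n → ℝ} {r : ℝ}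

theorem convex_setOf_mem_subdiff (hdom : ∃ x, f x ≠ ⊤) (hbot : ∀ x, f x ≠ ⊥)
    (hf : Convex ℝ (epi n f)) (hr : (r : EReal) = conj n f u) :
    Convex ℝ {x | u ∈ subdiff n f x} := by
  have hpre : {x | u ∈ subdiff n f x} = graphMap u r ⁻¹' epi n f := by
    ext x
    change u ∈ subdiff n f x ↔ f x ≤ ((x ⬝ᵥ u - r : ℝ) : EReal)
    rw [mem_subdiff_iff_of_coe_eq_conj hdom hbot hr]
    exact ⟨le_of_eq, fun h => le_antisymm h (coe_sub_le_of_coe_eq_conj (hbot x) hr)⟩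
  rw [hpre]
  exact hf.affine_preimage (graphMap u r)

/-- For `x` in the image, `q ↦ ⟨x, q.1⟩ - q.2` is at most `f x` on the graph of `f*`, which
contains `F*`, with equality at the relative interior point `(u, f* u)`, hence on all of `F*`. -/
theorem Psi_eq_image_graphMap (hdom : ∃ x, f x ≠ ⊤) (hbot : ∀ x, f x ≠ ⊥)
    {Fs : Set ((Fin n → ℝ) × ℝ)} (hFs : IsKMinExpFace n (epi n (conj n f)) Fs)
    (hr : (r : EReal) = conj n f u) (hu : (u, r) ∈ intrinsicInterior ℝ Fs) :
    Psi n f Fs = graphMap u r '' {x | u ∈ subdiff n f x} := by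
  have hgraph : ∀ q ∈ Fs, (q.2 : EReal) = conj n f q.1 := fun q hq =>
    coe_eq_conj_of_kMinPt hdom hbot (hFs.1.subset hq) (hFs.2 q hq)
  ext p
  constructor
  · intro hp
    obtain ⟨hp2, hpu⟩ := mem_iInter₂.1 hp (u, r) ⟨intrinsicInterior_subset hu, hr⟩
    refine ⟨p.1, hpu, Prod.ext rfl ?_⟩
    have := (mem_subdiff_iff_of_coe_eq_conj hdom hbot hr).1 hpu
    exact_mod_cast (hp2.trans this).symm
  · rintro ⟨x, hx, rfl⟩
    have hfx := (mem_subdiff_iff_of_coe_eq_conj hdom hbot hr).1 hx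
    refine mem_iInter₂.2 fun q ⟨hqFs, hq⟩ => ⟨hfx.symm, ?_⟩
    rw [graphMap_apply, mem_subdiff_iff_of_coe_eq_conj hdom hbot hq, hfx]
    let ℓ : (Fin n → ℝ) × ℝ →ₗ[ℝ] ℝ :=
      (dotProductBilin ℝ ℝ x).comp (LinearMap.fst ℝ _ _) - LinearMap.snd ℝ _ _
    have hmax : IsMaxOn ℓ Fs (u, r) := isMaxOn_iff.2 fun q' hq' => by
      have := coe_sub_le_of_coe_eq_conj (hbot x) (hgraph q' hq')
      rw [hfx, EReal.coe_le_coe_iff] at this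
      simpa [ℓ] using this
    have := hmax.eq_of_mem_intrinsicInterior hu hqFs
    simp only [ℓ, LinearMap.sub_apply, LinearMap.comp_apply, LinearMap.fst_apply,
      LinearMap.snd_apply, dotProductBilin_apply_apply] at this
    exact congrArg _ this.symm

end Graph

theorem stmt8_general (n : ℕ) (f : (Fin n → ℝ) → EReal)
    (hdom : ∃ x, f x ≠ ⊤) (hbot : ∀ x, f x ≠ ⊥)
    (hpoly : IsPolyhedral n (epi n f))
    (Fs : Set ((Fin n → ℝ) × ℝ))
    (hFs : IsKMinExpFace n (epi n (conj n f)) Fs)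
    (ub : Fin n → ℝ) (rb : ℝ) (hrb : (rb : EReal) = conj n f ub)
    (hub : (ub, rb) ∈ intrinsicInterior ℝ Fs)
    (xb : Fin n → ℝ) (sb : ℝ)
    (hxb : (xb, sb) ∈ intrinsicInterior ℝ (Psi n f Fs)) :
    ∃ W : Submodule ℝ (Fin n → ℝ),
      (W : Set (Fin n → ℝ)) =
        {w : Fin n → ℝ | ∃ tb > (0 : ℝ), ∀ t ∈ Set.Ioo (0 : ℝ) tb,
          ub ∈ subdiff n f (xb + t • w)} ∧
      Module.finrank ℝ W = dimSet n (Psi n f Fs) := by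
  rw [Psi_eq_image_graphMap hdom hbot hFs hrb hub] at hxb ⊢
  obtain ⟨hxbD, hpush⟩ :=
    mem_and_exists_add_smul_sub_mem_of_mem_intrinsicInterior_image_graphMap hxb
  have hD := convex_setOf_mem_subdiff hdom hbot hpoly.convex hrb
  refine ⟨(affineSpan ℝ {x | ub ∈ subdiff n f x}).direction, ?_,
    (dimSet_image_graphMap ub rb _).symm⟩
  rw [← hD.feasibleDirections_eq_direction hxbD hpush]
  ext w
  exact hD.mem_feasibleDirections_iff hxbD

/-- for a proper closed polyhedral convex f, a K-minimal exposed
face F* of epi f* with (ū,f*(ū)) ∈ ri F* and (x̄,f(x̄)) ∈ ri Ψ(F*), the set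
S = {w : ∃ t̄ > 0, ∀ t ∈ (0,t̄), ū ∈ ∂f(x̄+tw)} is a linear subspace with
dim S = dim Ψ(F*). -/
theorem stmt8 (n : ℕ) (f : (Fin n → ℝ) → EReal)
    (hdom : ∃ x, f x ≠ ⊤) (hbot : ∀ x, f x ≠ ⊥)
    (hpoly : IsPolyhedral n (epi n f))
    (Fs : Set ((Fin n → ℝ) × ℝ))
    (hFs : IsKMinExpFace n (epi n (conj n f)) Fs)
    (ub : Fin n → ℝ) (rb : ℝ) (hrb : (rb : EReal) = conj n f ub)
    (hub : (ub, rb) ∈ intrinsicInterior ℝ Fs)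
    (xb : Fin n → ℝ) (sb : ℝ) (hsb : (sb : EReal) = f xb)
    (hxb : (xb, sb) ∈ intrinsicInterior ℝ (Psi n f Fs)) :
    ∃ W : Submodule ℝ (Fin n → ℝ),
      (W : Set (Fin n → ℝ)) =
        {w : Fin n → ℝ | ∃ tb > (0 : ℝ), ∀ t ∈ Set.Ioo (0 : ℝ) tb,
          ub ∈ subdiff n f (xb + t • w)} ∧
      Module.finrank ℝ W = dimSet n (Psi n f Fs) :=
  stmt8_general n f hdom hbot hpoly Fs hFs ub rb hrb hub xb sb hxb
end
end

section
/- Let C ⊆ ℝ^q be a nonempty closed convex cone that is not a linear subspace and let k belong to the relative interior of C. Then the function φ(y) := inf{r ∈ ℝ : r·k − y ∈ C} satisfies φ(y) ≠ −∞ for every y ∈ ℝ^q, i.e., for every y ∈ ℝ^q the set {r ∈ ℝ : r·k − y ∈ C} is bounded below (possibly empty). -/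
open Filter Topology

/-! If the set `{r | r • k - y ∈ C}` were unbounded below, rescaling `r • k - y` by `(-r)⁻¹`
gives points `-k + r⁻¹ • y` of the closed cone `C` converging to `-k`, so `-k ∈ C`. But a convex
cone containing `-k` for some `k` in its relative interior is a linear subspace: for `x` in its
span, `k + δ • x ∈ C` for small `δ > 0`, hence `δ • x = (k + δ • x) + (-k) ∈ C` and `x ∈ C`. -/

section ConvexCone

variable {E : Type*} [AddCommGroup E] [Module ℝ E] {C : Set E}

theorem Convex.add_mem_of_smul_mem (hcv : Convex ℝ C)
    (hcone : ∀ c ∈ C, ∀ t : ℝ, 0 ≤ t → t • c ∈ C) {a b : E} (ha : a ∈ C) (hb : b ∈ C) :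
    a + b ∈ C := by
  have hmid := hcv ha hb (by norm_num : (0 : ℝ) ≤ 1 / 2) (by norm_num : (0 : ℝ) ≤ 1 / 2)
    (by norm_num)
  convert hcone _ hmid 2 zero_le_two using 1
  module

variable [TopologicalSpace E] [IsTopologicalAddGroup E] [ContinuousSMul ℝ E]

theorem eventually_add_smul_mem_of_mem_intrinsicInterior {k x : E}
    (hk : k ∈ intrinsicInterior ℝ C) (hx : x ∈ vectorSpan ℝ C) :
    ∀ᶠ t in 𝓝 (0 : ℝ), t • x + k ∈ C := by
  obtain ⟨z, hz, rfl⟩ := hk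
  rw [← direction_affineSpan] at hx
  let g : ℝ → affineSpan ℝ C := fun t =>
    ⟨t • x + (z : E), AffineSubspace.vadd_mem_of_mem_direction
      ((affineSpan ℝ C).direction.smul_mem t hx) z.2⟩
  have hg : Continuous g := by fun_prop
  have hg0 : g 0 = z := by ext; simp [g]
  exact hg.continuousAt.preimage_mem_nhds (hg0 ▸ mem_interior_iff_mem_nhds.mp hz)

theorem neg_mem_of_not_bddBelow (hcl : IsClosed C)
    (hcone : ∀ c ∈ C, ∀ t : ℝ, 0 ≤ t → t • c ∈ C) {k y : E}
    (hunb : ¬BddBelow {r : ℝ | r • k - y ∈ C}) : -k ∈ C := by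
  have hfreq : ∃ᶠ r in atBot, r • k - y ∈ C :=
    frequently_atBot.mpr fun a => by
      obtain ⟨r, hr, hra⟩ := not_bddBelow_iff.mp hunb a
      exact ⟨r, hra.le, hr⟩
  have hlim : Tendsto (fun r : ℝ => -k + r⁻¹ • y) atBot (𝓝 (-k)) := by
    simpa using ((tendsto_inv_atBot_zero (𝕜 := ℝ)).smul_const y).const_add (-k)
  refine hcl.mem_of_frequently_of_tendsto ?_ hlim
  refine (hfreq.and_eventually (eventually_lt_atBot 0)).mono fun r ⟨hr, hneg⟩ => ?_
  convert hcone _ hr (-r)⁻¹ (inv_nonneg.mpr (neg_nonneg.mpr hneg.le)) using 1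
  match_scalars <;> field_simp [hneg.ne]

theorem Convex.coe_span_eq_of_neg_mem_of_mem_intrinsicInterior (hcv : Convex ℝ C)
    (hcone : ∀ c ∈ C, ∀ t : ℝ, 0 ≤ t → t • c ∈ C) {k : E}
    (hk : k ∈ intrinsicInterior ℝ C) (hmk : -k ∈ C) :
    (Submodule.span ℝ C : Set E) = C := by
  refine subset_antisymm (fun x hx => ?_) Submodule.subset_span
  have h0 : (0 : E) ∈ C := by simpa using hcone k (intrinsicInterior_subset hk) 0 le_rfl
  have hxV : x ∈ vectorSpan ℝ C :=
    Submodule.span_le.mpr (fun c hc => by simpa using vsub_mem_vectorSpan ℝ hc h0) hx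
  obtain ⟨δ, hδ, hδx⟩ := (eventually_add_smul_mem_of_mem_intrinsicInterior hk hxV).exists_gt
  have hδxC : δ • x ∈ C := by
    simpa using hcv.add_mem_of_smul_mem hcone hδx hmk
  simpa [smul_smul, inv_mul_cancel₀ hδ.ne'] using hcone _ hδxC δ⁻¹ (inv_nonneg.mpr hδ.le)

end ConvexCone

theorem stmt11_general (q : ℕ) (C : Set (Fin q → ℝ))
    (hcl : IsClosed C) (hcv : Convex ℝ C)
    (hcone : ∀ c ∈ C, ∀ t : ℝ, 0 ≤ t → t • c ∈ C)
    (hnotlin : ¬∃ W : Submodule ℝ (Fin q → ℝ), (W : Set (Fin q → ℝ)) = C)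
    (k : Fin q → ℝ) (hk : k ∈ intrinsicInterior ℝ C) :
    ∀ y : Fin q → ℝ, BddBelow {r : ℝ | r • k - y ∈ C} := by
  intro y
  by_contra hunb
  have hmk : -k ∈ C := neg_mem_of_not_bddBelow hcl hcone hunb
  exact hnotlin ⟨_, hcv.coe_span_eq_of_neg_mem_of_mem_intrinsicInterior hcone hk hmk⟩

/-- for a nonempty closed convex cone C ⊆ ℝ^q that is not a linear
subspace and k ∈ ri C, the function φ(y) = inf{r : r·k − y ∈ C} never takes the
value −∞, i.e., {r : r·k − y ∈ C} is bounded below for every y. -/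
theorem stmt11 (q : ℕ) (C : Set (Fin q → ℝ))
    (hne : C.Nonempty) (hcl : IsClosed C) (hcv : Convex ℝ C)
    (hcone : ∀ c ∈ C, ∀ t : ℝ, 0 ≤ t → t • c ∈ C)
    (hnotlin : ¬∃ W : Submodule ℝ (Fin q → ℝ), (W : Set (Fin q → ℝ)) = C)
    (k : Fin q → ℝ) (hk : k ∈ intrinsicInterior ℝ C) :
    ∀ y : Fin q → ℝ, BddBelow {r : ℝ | r • k - y ∈ C} :=
  stmt11_general q C hcl hcv hcone hnotlin k hk
end

section
/- In the setting of a C-convex vector optimization problem with P = cl(Γ[X] + C) nontrivial, k ∈ ri C, T = (e¹,…,e^{q−1},k) invertible, and f(z) := inf_{x ∈ X} φ(Γ(x) − Ez): the Legendre–Fenchel conjugate of f is given by f*(w) = sup_{x ∈ X} ( − ⟨c*(−w), Γ(x)⟩ ) if c*(−w) ∈ C⁺, and f*(w) = +∞ otherwise, where c*(w) := T^{−T}·(w,1)ᵀ and C⁺ := {c* ∈ ℝ^q : ⟨c*, c⟩ ≥ 0 for all c ∈ C} is the positive dual cone of C. -/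
open Matrix Set
open scoped Pointwise

noncomputable section

/-- Γ is C-convex. -/
def CConvex (q m : ℕ) (C : Set (Fin (q + 1) → ℝ))
    (Γ : (Fin m → ℝ) → Fin (q + 1) → ℝ) : Prop :=
  ∀ x₁ x₂ : Fin m → ℝ, ∀ t ∈ Set.Icc (0 : ℝ) 1,
    (1 - t) • Γ x₁ + t • Γ x₂ - Γ ((1 - t) • x₁ + t • x₂) ∈ C

/-- The upper closed extended image P = cl(Γ[X] + C). -/
def Pimg (q m : ℕ) (Γ : (Fin m → ℝ) → Fin (q + 1) → ℝ) (X : Set (Fin m → ℝ))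
    (C : Set (Fin (q + 1) → ℝ)) : Set (Fin (q + 1) → ℝ) :=
  closure (Γ '' X + C)

/-- The linear map E, sending z ∈ ℝ^{q-1} to Ez = Σ z_i e^i. -/
def Emap (q : ℕ) (e : Fin q → Fin (q + 1) → ℝ) (z : Fin q → ℝ) : Fin (q + 1) → ℝ :=
  ∑ i, z i • e i

/-- The scalarization functional φ(y) = inf{r ∈ ℝ : r·k − y ∈ C} (inf ∅ = +∞). -/
def phiF (q : ℕ) (C : Set (Fin (q + 1) → ℝ)) (k : Fin (q + 1) → ℝ)
    (y : Fin (q + 1) → ℝ) : EReal :=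
  sInf ((fun r : ℝ => (r : EReal)) '' {r : ℝ | r • k - y ∈ C})

/-- f(z) = inf_{x ∈ X} φ(Γ(x) − Ez). -/
def fF (q m : ℕ) (C : Set (Fin (q + 1) → ℝ)) (k : Fin (q + 1) → ℝ)
    (e : Fin q → Fin (q + 1) → ℝ) (Γ : (Fin m → ℝ) → Fin (q + 1) → ℝ)
    (X : Set (Fin m → ℝ)) (z : Fin q → ℝ) : EReal :=
  ⨅ x ∈ X, phiF q C k (Γ x - Emap q e z)

/-- The matrix T = (e¹,…,e^{q−1},k) (columns e¹,…,e^{q−1},k). -/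
def Tmat (q : ℕ) (e : Fin q → Fin (q + 1) → ℝ) (k : Fin (q + 1) → ℝ) :
    Matrix (Fin (q + 1)) (Fin (q + 1)) ℝ :=
  Matrix.of fun i j => (Fin.snoc e k : Fin (q + 1) → Fin (q + 1) → ℝ) j i

/-- c*(w) = T^{−T}·(w,1)ᵀ. -/
def cstarF (q : ℕ) (e : Fin q → Fin (q + 1) → ℝ) (k : Fin (q + 1) → ℝ)
    (w : Fin q → ℝ) : Fin (q + 1) → ℝ :=
  ((Tmat q e k)⁻¹)ᵀ *ᵥ (Fin.snoc w 1 : Fin (q + 1) → ℝ)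

/-- The positive dual cone C⁺ = {c* : ⟨c*,c⟩ ≥ 0 for all c ∈ C}. -/
def Cplus (q : ℕ) (C : Set (Fin (q + 1) → ℝ)) : Set (Fin (q + 1) → ℝ) :=
  {v | ∀ c ∈ C, 0 ≤ v ⬝ᵥ c}

/-- The Legendre–Fenchel conjugate f*(w) = sup_z (⟨z,w⟩ − f(z)). -/
def conjq (q : ℕ) (f : (Fin q → ℝ) → EReal) (w : Fin q → ℝ) : EReal :=
  ⨆ z : Fin q → ℝ, (((z ⬝ᵥ w : ℝ) : EReal) - f z)


section prelim
variable {q : ℕ} {e : Fin q → Fin (q + 1) → ℝ} {k : Fin (q + 1) → ℝ}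

lemma isUnit_Tmat (hli : LinearIndependent ℝ (Fin.snoc e k : Fin (q + 1) → Fin (q + 1) → ℝ)) :
    IsUnit (Tmat q e k) := by
  apply Matrix.linearIndependent_cols_iff_isUnit.mp
  exact hli

lemma Tmat_snoc (hli : LinearIndependent ℝ (Fin.snoc e k : Fin (q + 1) → Fin (q + 1) → ℝ))
    (w : Fin q → ℝ) (j : Fin (q + 1)) :
    (Fin.snoc e k : Fin (q + 1) → Fin (q + 1) → ℝ) j ⬝ᵥ cstarF q e k w
      = (Fin.snoc w 1 : Fin (q + 1) → ℝ) j := by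
  have hd : IsUnit (Tmat q e k).det :=
    (Matrix.isUnit_iff_isUnit_det _).mp (isUnit_Tmat hli)
  have : (Tmat q e k)ᵀ *ᵥ cstarF q e k w = (Fin.snoc w 1 : Fin (q + 1) → ℝ) := by
    rw [cstarF, Matrix.mulVec_mulVec, ← Matrix.transpose_mul,
      Matrix.nonsing_inv_mul _ hd, Matrix.transpose_one, Matrix.one_mulVec]
  exact congrFun this j

lemma cs_dot_e (hli : LinearIndependent ℝ (Fin.snoc e k : Fin (q + 1) → Fin (q + 1) → ℝ))
    (w : Fin q → ℝ) (i : Fin q) :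
    cstarF q e k w ⬝ᵥ e i = w i := by
  have := Tmat_snoc hli w (Fin.castSucc i)
  simpa [Fin.snoc_castSucc, dotProduct_comm] using this

lemma cs_dot_k (hli : LinearIndependent ℝ (Fin.snoc e k : Fin (q + 1) → Fin (q + 1) → ℝ))
    (w : Fin q → ℝ) : cstarF q e k w ⬝ᵥ k = 1 := by
  have := Tmat_snoc hli w (Fin.last q)
  simpa [Fin.snoc_last, dotProduct_comm] using this

lemma cs_dot_Emap (hli : LinearIndependent ℝ (Fin.snoc e k : Fin (q + 1) → Fin (q + 1) → ℝ))
    (w z : Fin q → ℝ) :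
    cstarF q e k w ⬝ᵥ Emap q e z = z ⬝ᵥ w := by
  simp only [Emap, dotProduct, Finset.sum_apply, Pi.smul_apply, smul_eq_mul,
    Finset.mul_sum]
  rw [Finset.sum_comm]
  refine Finset.sum_congr rfl fun i _ => ?_
  have h := cs_dot_e hli w i
  simp only [dotProduct] at h
  have h2 : ∑ j, cstarF q e k w j * (z i * e i j) = z i * ∑ j, cstarF q e k w j * e i j := by
    rw [Finset.mul_sum]; exact Finset.sum_congr rfl fun j _ => by ring
  rw [h2, h]

lemma halg (hli : LinearIndependent ℝ (Fin.snoc e k : Fin (q + 1) → Fin (q + 1) → ℝ))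
    (w : Fin q → ℝ) (z : Fin q → ℝ) (r : ℝ) (y : Fin (q + 1) → ℝ) :
    cstarF q e k w ⬝ᵥ (r • k - (y - Emap q e z)) =
      r - cstarF q e k w ⬝ᵥ y + z ⬝ᵥ w := by
  simp only [dotProduct_sub, dotProduct_smul, smul_eq_mul,
    cs_dot_k hli, cs_dot_Emap hli]
  ring

lemma hdec (hli : LinearIndependent ℝ (Fin.snoc e k : Fin (q + 1) → Fin (q + 1) → ℝ))
    (v : Fin (q + 1) → ℝ) :
    ∃ (z : Fin q → ℝ) (r : ℝ), Emap q e z + r • k = v := by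
  have hd : IsUnit (Tmat q e k).det :=
    (Matrix.isUnit_iff_isUnit_det _).mp (isUnit_Tmat hli)
  set u := (Tmat q e k)⁻¹ *ᵥ v with hu
  refine ⟨fun i => u (Fin.castSucc i), u (Fin.last q), ?_⟩
  have hTu : Tmat q e k *ᵥ u = v := by
    rw [hu, Matrix.mulVec_mulVec, Matrix.mul_nonsing_inv _ hd, Matrix.one_mulVec]
  funext i
  have hvi : v i = ∑ j, u j * (Fin.snoc e k : Fin (q+1) → Fin (q+1) → ℝ) j i := by
    rw [← hTu]; simp [Matrix.mulVec, dotProduct, Tmat, mul_comm]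
  rw [hvi, Fin.sum_univ_castSucc]
  simp [Emap, Fin.snoc_castSucc, Fin.snoc_last]

end prelim

lemma ereal_coe_sub_cancel (a : ℝ) (x : EReal) : (a : EReal) - ((a : EReal) - x) = x := by
  induction x using EReal.rec with
  | bot => rw [EReal.coe_sub_bot, EReal.sub_top]
  | coe x => rw [← EReal.coe_sub, ← EReal.coe_sub]; norm_num
  | top => rw [EReal.sub_top, EReal.coe_sub_bot]

lemma ereal_sub_iInf {ι : Sort*} (a : ℝ) (g : ι → EReal) :
    (a : EReal) - ⨅ i, g i = ⨆ i, ((a : EReal) - g i) := by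
  apply le_antisymm
  · have h1 : ∀ i, (a : EReal) - (⨆ i, ((a : EReal) - g i)) ≤ g i := fun i => by
      have := EReal.sub_le_sub (le_refl (a : EReal)) (le_iSup (fun i => (a : EReal) - g i) i)
      rwa [ereal_coe_sub_cancel] at this
    have := EReal.sub_le_sub (le_refl (a : EReal)) (le_iInf h1)
    rwa [ereal_coe_sub_cancel] at this
  · exact iSup_le fun i => EReal.sub_le_sub le_rfl (iInf_le _ i)

lemma ereal_sub_sInf_image (a : ℝ) (S : Set ℝ) :
    (a : EReal) - sInf ((fun r : ℝ => (r : EReal)) '' S) = ⨆ r : S, ((a - (r : ℝ) : ℝ) : EReal) := by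
  rw [sInf_image', ereal_sub_iInf]
  exact iSup_congr fun r => (EReal.coe_sub a r).symm

/-- f*(w) = sup_{x ∈ X} (−⟨c*(−w),Γ(x)⟩) if c*(−w) ∈ C⁺,
and f*(w) = +∞ otherwise. -/
theorem stmt15 (q m : ℕ) (C : Set (Fin (q + 1) → ℝ))
    (hne : C.Nonempty) (hcl : IsClosed C) (hcv : Convex ℝ C)
    (hcone : ∀ c ∈ C, ∀ t : ℝ, 0 ≤ t → t • c ∈ C)
    (hnotlin : ¬∃ W : Submodule ℝ (Fin (q + 1) → ℝ), (W : Set (Fin (q + 1) → ℝ)) = C)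
    (Γ : (Fin m → ℝ) → Fin (q + 1) → ℝ) (hΓ : CConvex q m C Γ)
    (X : Set (Fin m → ℝ)) (hX : X.Nonempty) (hXcv : Convex ℝ X)
    (k : Fin (q + 1) → ℝ) (hk : k ∈ intrinsicInterior ℝ C)
    (e : Fin q → Fin (q + 1) → ℝ)
    (hli : LinearIndependent ℝ (Fin.snoc e k : Fin (q + 1) → Fin (q + 1) → ℝ))
    (hP : (Pimg q m Γ X C).Nonempty ∧ Pimg q m Γ X C ≠ Set.univ) :
    ∀ w : Fin q → ℝ,
      (cstarF q e k (-w) ∈ Cplus q C →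
        conjq q (fF q m C k e Γ X) w =
          ⨆ x ∈ X, ((-(cstarF q e k (-w) ⬝ᵥ Γ x) : ℝ) : EReal)) ∧
      (cstarF q e k (-w) ∉ Cplus q C →
        conjq q (fF q m C k e Γ X) w = ⊤) := by
  intro w
  set cs := cstarF q e k (-w) with hcs
  have hdot : ∀ (z : Fin q → ℝ) (r : ℝ) (y : Fin (q + 1) → ℝ),
      cs ⬝ᵥ (r • k - (y - Emap q e z)) = r - cs ⬝ᵥ y - z ⬝ᵥ w := by
    intro z r y
    rw [hcs, halg hli (-w) z r y]
    have hzw : z ⬝ᵥ (-w) = -(z ⬝ᵥ w) := by simp [dotProduct]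
    rw [hzw]; ring
  have hzero : (0 : Fin (q + 1) → ℝ) ∈ C := by
    obtain ⟨c, hc⟩ := hne
    simpa using hcone c hc 0 le_rfl
  have hlow : ∀ x ∈ X, ∀ (z : Fin q → ℝ) (r : ℝ),
      r • k - (Γ x - Emap q e z) ∈ C →
      ((z ⬝ᵥ w - r : ℝ) : EReal) ≤ conjq q (fF q m C k e Γ X) w := by
    intro x hx z r hr
    have h1 : phiF q C k (Γ x - Emap q e z) ≤ (r : EReal) := sInf_le ⟨r, hr, rfl⟩
    have h2 : fF q m C k e Γ X z ≤ (r : EReal) := by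
      rw [fF]; exact le_trans (iInf₂_le x hx) h1
    have h3 : ((z ⬝ᵥ w - r : ℝ) : EReal) ≤ ((z ⬝ᵥ w : ℝ) : EReal) - fF q m C k e Γ X z := by
      rw [EReal.coe_sub]
      exact EReal.sub_le_sub le_rfl h2
    exact le_trans h3 (le_iSup (fun z => ((z ⬝ᵥ w : ℝ) : EReal) - fF q m C k e Γ X z) z)
  constructor
  · intro hcp
    apply le_antisymm
    · rw [conjq]
      refine iSup_le fun z => ?_
      rw [fF]
      rw [ereal_sub_iInf]
      refine iSup_le fun x => ?_
      rw [ereal_sub_iInf]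
      refine iSup_le fun hx => ?_
      rw [phiF, ereal_sub_sInf_image]
      refine iSup_le fun r => ?_
      have hge : (0 : ℝ) ≤ cs ⬝ᵥ ((r : ℝ) • k - (Γ x - Emap q e z)) := hcp _ r.2
      rw [hdot] at hge
      have hle : z ⬝ᵥ w - (r : ℝ) ≤ -(cs ⬝ᵥ Γ x) := by linarith
      calc ((z ⬝ᵥ w - (r : ℝ) : ℝ) : EReal) ≤ ((-(cs ⬝ᵥ Γ x) : ℝ) : EReal) :=
            EReal.coe_le_coe_iff.mpr hle
        _ ≤ ⨆ x ∈ X, ((-(cs ⬝ᵥ Γ x) : ℝ) : EReal) :=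
            le_iSup₂ (f := fun x (_ : x ∈ X) => ((-(cs ⬝ᵥ Γ x) : ℝ) : EReal)) x hx
    · refine iSup₂_le fun x hx => ?_
      obtain ⟨z, r, hzr⟩ := hdec hli (Γ x)
      have hc0 : r • k - (Γ x - Emap q e z) = 0 := by rw [← hzr]; abel
      have hmem : r • k - (Γ x - Emap q e z) ∈ C := by rw [hc0]; exact hzero
      have hval : z ⬝ᵥ w - r = -(cs ⬝ᵥ Γ x) := by
        have h0 : cs ⬝ᵥ (r • k - (Γ x - Emap q e z)) = 0 := by
          rw [hc0, dotProduct_zero]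
        rw [hdot] at h0; linarith
      have := hlow x hx z r hmem
      rwa [hval] at this
  · intro hcp
    simp only [Cplus, Set.mem_setOf_eq, not_forall] at hcp
    obtain ⟨c0, hc0, hneg⟩ := hcp
    rw [not_le] at hneg
    obtain ⟨x0, hx0⟩ := hX
    by_contra hA
    have hlt : conjq q (fF q m C k e Γ X) w < ⊤ := lt_top_iff_ne_top.mpr hA
    obtain ⟨M, hM1, hM2⟩ := EReal.lt_iff_exists_real_btwn.mp hlt
    set d := cs ⬝ᵥ c0 with hd
    set t := max 0 ((-(cs ⬝ᵥ Γ x0) - M) / d) with ht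
    have ht0 : (0 : ℝ) ≤ t := le_max_left _ _
    have htd : t * d ≤ -(cs ⬝ᵥ Γ x0) - M := by
      have h1 : (-(cs ⬝ᵥ Γ x0) - M) / d ≤ t := le_max_right _ _
      have h2 := mul_le_mul_of_nonpos_right h1 (le_of_lt hneg)
      rwa [div_mul_cancel₀ _ (ne_of_lt hneg)] at h2
    obtain ⟨z, r, hzr⟩ := hdec hli (Γ x0 + t • c0)
    have heq : r • k - (Γ x0 - Emap q e z) = t • c0 := by
      have h5 : t • c0 = Emap q e z + r • k - Γ x0 := by rw [hzr]; abel
      rw [h5]; abel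
    have hmem : r • k - (Γ x0 - Emap q e z) ∈ C := by
      rw [heq]; exact hcone c0 hc0 t ht0
    have hv : t * d = r - cs ⬝ᵥ Γ x0 - z ⬝ᵥ w := by
      have h3 := hdot z r (Γ x0)
      rw [heq] at h3
      rw [← h3, hd, dotProduct_smul, smul_eq_mul]
    have hMle : M ≤ z ⬝ᵥ w - r := by linarith
    have h4 : (M : EReal) ≤ conjq q (fF q m C k e Γ X) w :=
      le_trans (EReal.coe_le_coe_iff.mpr hMle) (hlow x0 hx0 z r hmem)
    exact absurd hM1 (not_lt.mpr h4)
end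
end

section
/- Consider a linear vector optimization problem: Γ : ℝᵐ → ℝ^q a linear map, X = {x ∈ ℝᵐ : Ax ≥ b} nonempty for A ∈ ℝ^{p×m}, b ∈ ℝ^p, C ⊆ ℝ^q a nonempty closed convex cone that is not a linear subspace, and k ∈ ri C with k_q = 1; take E to be the matrix whose columns are the first q−1 standard unit vectors of ℝ^q and T = (E, k). Then the dual image D = {(w,s) ∈ ℝ^{q−1} × ℝ : c*(w) ∈ C⁺, s ≤ sup{bᵀu : u ≥ 0, Aᵀu = Γᵀ c*(w)}} admits the representation D = {(c*₁,…,c*_{q−1}, bᵀu − r) : c* ∈ C⁺, u ≥ 0, u ∈ ℝ^p, Aᵀu = Γᵀ c*, kᵀ c* = 1, r ≥ 0}. -/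
/-!
A point `(w, s)` of `D` gives `c* = c*(w)` with `kᵀc* = 1` because `k_q = 1`, and conversely every
`c*` with `kᵀc* = 1` is `c*(w)` for `w` its first `q − 1` coordinates. The remaining point is that
`s ≤ sup {bᵀu : u ≥ 0, Aᵀu = Γᵀc*}` is witnessed by a single feasible `u` with `s ≤ bᵀu`, even
when the supremum is not known to be finite. The cone `{(Mu, bᵀu − r) : u ≥ 0, r ≥ 0}` is
finitely generated, hence closed: by conic Carathéodory it is a finite union of images of
orthants under injective linear maps. It contains `(c, s − ε)` for every `ε > 0`, hence `(c, s)`.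
-/

open Matrix Set

noncomputable section

/-- c*(w) = T^{−T}·(w,1)ᵀ = (w₁,…,w_{q−1}, 1 − Σ_{i=1}^{q−1} k_i w_i)ᵀ, for
T = (E,k) with E the first q−1 standard unit vectors. -/
def cstarL (q : ℕ) (k : Fin (q + 1) → ℝ) (w : Fin q → ℝ) : Fin (q + 1) → ℝ :=
  Fin.snoc w (1 - ∑ i : Fin q, k i.castSucc * w i)

open Function Topology

theorem Fintype.linearIndepOn_iff_forall_sum_smul {R M ι : Type*} [Ring R] [AddCommGroup M]
    [Module R M] [Fintype ι] {v : ι → M} {s : Set ι} :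
    LinearIndepOn R v s ↔ ∀ t : ι → R, support t ⊆ s → ∑ i, t i • v i = 0 → t = 0 := by
  classical
  have sum_eq (t : ι → R) (u : Finset ι) (htu : ∀ i ∉ u, t i = 0) :
      ∑ i ∈ u, t i • v i = ∑ i, t i • v i :=
    Finset.sum_subset (Finset.subset_univ u) fun i _ hi => by simp [htu i hi]
  rw [linearIndepOn_iff'']
  constructor
  · intro h t hts h0
    funext i
    by_cases hi : i ∈ s
    · refine h s.toFinset t (by simp) (fun j hj => ?_) ?_ i (by simpa)
      · exact support_subset_iff'.1 hts j (by simpa using hj)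
      · rwa [sum_eq t _ fun j hj => support_subset_iff'.1 hts j (by simpa using hj)]
    · exact support_subset_iff'.1 hts i hi
  · intro h u t hus htu h0 i _
    have hsupp : support t ⊆ u := support_subset_iff'.2 htu
    exact congr_fun (h t (hsupp.trans hus) (by rwa [← sum_eq t u htu])) i

section ConicHull

variable {ι F : Type*} [Fintype ι] [AddCommGroup F] [Module ℝ F]

def conicHull (g : ι → F) : Set F :=
  {x | ∃ t : ι → ℝ, 0 ≤ t ∧ ∑ i, t i • g i = x}

variable {g : ι → F}

theorem exists_nonneg_support_ssubset_sum_smul_eq {t f : ι → ℝ} (ht : 0 ≤ t)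
    (hft : support f ⊆ support t) (hf : ∑ i, f i • g i = 0) (hpos : ∃ i, 0 < f i) :
    ∃ t' : ι → ℝ, 0 ≤ t' ∧ support t' ⊂ support t ∧ ∑ i, t' i • g i = ∑ i, t i • g i := by
  classical
  -- move from `t` along `-f` until the first coordinate `j` hits zero
  obtain ⟨j, hj, hmin⟩ := (Finset.univ.filter (0 < f ·)).exists_min_image (fun i => t i / f i)
    (by obtain ⟨i, hi⟩ := hpos; exact ⟨i, by simpa⟩)
  simp only [Finset.mem_filter, Finset.mem_univ, true_and] at hj hmin
  set τ := t j / f j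
  have hτ : 0 ≤ τ := div_nonneg (ht j) hj.le
  have hτj : t j - τ * f j = 0 := by simp [τ, div_mul_cancel₀ _ hj.ne']
  refine ⟨t - τ • f, fun i => ?_, ?_, ?_⟩
  · simp only [Pi.zero_apply, Pi.sub_apply, Pi.smul_apply, smul_eq_mul, sub_nonneg]
    rcases le_or_gt (f i) 0 with hi | hi
    · exact (mul_nonpos_of_nonneg_of_nonpos hτ hi).trans (ht i)
    · exact (le_div_iff₀ hi).1 (hmin i hi)
  · have hsub : support (t - τ • f) ⊆ support t := fun i hi => by
      by_contra h
      simp [notMem_support.1 h, support_subset_iff'.1 hft i h] at hi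
    refine (ssubset_iff_of_subset hsub).2 ⟨j, hft (ne_of_gt hj), by simpa using hτj⟩
  · simp [sub_smul, Finset.sum_sub_distrib, mul_smul, ← Finset.smul_sum, hf]

theorem exists_nonneg_linearIndepOn_support_sum_smul_eq {t : ι → ℝ} (ht : 0 ≤ t) :
    ∃ t' : ι → ℝ, 0 ≤ t' ∧ LinearIndepOn ℝ g (support t') ∧
      ∑ i, t' i • g i = ∑ i, t i • g i := by
  induction hn : (support t).ncard using Nat.strong_induction_on generalizing t with
  | _ n ih =>
  by_cases hli : LinearIndepOn ℝ g (support t)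
  · exact ⟨t, ht, hli, rfl⟩
  obtain ⟨f, hft, hf, hf0⟩ : ∃ f : ι → ℝ, support f ⊆ support t ∧ ∑ i, f i • g i = 0 ∧ f ≠ 0 := by
    simpa [Fintype.linearIndepOn_iff_forall_sum_smul] using hli
  obtain ⟨f, hft, hf, hpos⟩ : ∃ f : ι → ℝ, support f ⊆ support t ∧ ∑ i, f i • g i = 0 ∧
      ∃ i, 0 < f i := by
    obtain ⟨i, hi⟩ := Function.ne_iff.1 hf0
    rcases hi.lt_or_gt with hneg | hpos
    · exact ⟨-f, by simpa using hft, by simp [hf], i, by simpa using hneg⟩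
    · exact ⟨f, hft, hf, i, hpos⟩
  obtain ⟨t', ht', hsub, hsum⟩ := exists_nonneg_support_ssubset_sum_smul_eq ht hft hf hpos
  obtain ⟨t'', ht'', hli'', hsum''⟩ := ih _ (hn ▸ ncard_lt_ncard hsub) ht' rfl
  exact ⟨t'', ht'', hli'', hsum''.trans hsum⟩

variable [TopologicalSpace F] [IsTopologicalAddGroup F] [ContinuousSMul ℝ F] [T2Space F]

theorem LinearIndepOn.isClosed_image_nonneg {s : Set ι} (hs : LinearIndepOn ℝ g s) :
    IsClosed ((fun t => ∑ i, t i • g i) '' {t : ι → ℝ | 0 ≤ t ∧ support t ⊆ s}) := by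
  set V : Submodule ℝ (ι → ℝ) := Submodule.pi sᶜ fun _ => ⊥
  have hV (t : ι → ℝ) : t ∈ V ↔ support t ⊆ s := by
    rw [support_subset_iff']
    simp [V, Submodule.mem_pi]
  set L := Fintype.linearCombination ℝ g ∘ₗ V.subtype
  have hL : IsClosedEmbedding L := by
    refine LinearMap.isClosedEmbedding_of_injective (LinearMap.ker_eq_bot'.2 ?_)
    rintro ⟨t, htV⟩ h0
    exact Subtype.ext (Fintype.linearIndepOn_iff_forall_sum_smul.1 hs t ((hV t).1 htV)
      (by simpa [L, Fintype.linearCombination_apply] using h0))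
  have himage : (fun t => ∑ i, t i • g i) '' {t : ι → ℝ | 0 ≤ t ∧ support t ⊆ s} =
      L '' {v | 0 ≤ (v : ι → ℝ)} := by
    ext x
    constructor
    · rintro ⟨t, ⟨ht, hts⟩, rfl⟩
      exact ⟨⟨t, (hV t).2 hts⟩, ht, by simp [L, Fintype.linearCombination_apply]⟩
    · rintro ⟨⟨t, htV⟩, ht, rfl⟩
      exact ⟨t, ⟨ht, (hV t).1 htV⟩, by simp [L, Fintype.linearCombination_apply]⟩
  rw [himage]
  exact hL.isClosedMap _ (isClosed_Ici.preimage continuous_subtype_val)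

theorem isClosed_conicHull (g : ι → F) : IsClosed (conicHull g) := by
  have hunion : conicHull g = ⋃ s : {s : Set ι // LinearIndepOn ℝ g s},
      (fun t => ∑ i, t i • g i) '' {t : ι → ℝ | 0 ≤ t ∧ support t ⊆ s} := by
    ext x
    simp only [conicHull, mem_ofPred_eq, mem_iUnion, mem_image]
    constructor
    · rintro ⟨t, ht, rfl⟩
      obtain ⟨t', ht', hli, hsum⟩ := exists_nonneg_linearIndepOn_support_sum_smul_eq (g := g) ht
      exact ⟨⟨_, hli⟩, t', ⟨ht', subset_rfl⟩, hsum⟩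
    · rintro ⟨_, t, ⟨ht, _⟩, rfl⟩
      exact ⟨t, ht, rfl⟩
  rw [hunion]
  exact isClosed_iUnion_of_finite fun s => s.2.isClosed_image_nonneg

end ConicHull

theorem Matrix.exists_nonneg_mulVec_eq_le_dotProduct {m n : Type*} [Fintype n]
    {M : Matrix m n ℝ} {b : n → ℝ} {c : m → ℝ} {s : ℝ}
    (hs : (s : EReal) ≤ ⨆ u ∈ {u : n → ℝ | (∀ i, 0 ≤ u i) ∧ M *ᵥ u = c}, ((b ⬝ᵥ u : ℝ) : EReal)) :
    ∃ u : n → ℝ, (∀ i, 0 ≤ u i) ∧ M *ᵥ u = c ∧ s ≤ b ⬝ᵥ u := by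
  -- the columns `(Mⱼ, bⱼ)` and the slack direction `(0, -1)`
  let gen : Option n → (m → ℝ) × ℝ := fun o => o.elim (0, -1) fun j => (fun i => M i j, b j)
  have sum_gen (t : Option n → ℝ) :
      ∑ o, t o • gen o = (M *ᵥ fun j => t (some j), b ⬝ᵥ (fun j => t (some j)) - t none) := by
    rw [Fintype.sum_option]
    ext i <;> simp [gen, Prod.fst_sum, Prod.snd_sum, Finset.sum_apply, mulVec, dotProduct, mul_comm,
      sub_eq_neg_add]
  have happrox : Ioi 0 ⊆ {ε : ℝ | (c, s - ε) ∈ conicHull gen} := by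
    intro ε (hε : 0 < ε)
    obtain ⟨u, ⟨hu, hMu⟩, hlt⟩ : ∃ u ∈ {u : n → ℝ | (∀ i, 0 ≤ u i) ∧ M *ᵥ u = c},
        s - ε < b ⬝ᵥ u := by
      have : ((s - ε : ℝ) : EReal) < ⨆ u ∈ {u : n → ℝ | (∀ i, 0 ≤ u i) ∧ M *ᵥ u = c},
          ((b ⬝ᵥ u : ℝ) : EReal) := lt_of_lt_of_le (EReal.coe_lt_coe_iff.2 (by linarith)) hs
      simpa only [lt_iSup_iff, EReal.coe_lt_coe_iff, exists_prop] using this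
    refine ⟨fun o => o.elim (b ⬝ᵥ u - (s - ε)) u, ?_, ?_⟩
    · rintro (_ | j)
      · simp only [Pi.zero_apply, Option.elim_none]; linarith
      · exact hu j
    · rw [sum_gen]
      simp [hMu]
  have hclosed : IsClosed {ε : ℝ | (c, s - ε) ∈ conicHull gen} :=
    (isClosed_conicHull gen).preimage (by fun_prop)
  obtain ⟨t, ht, hts⟩ : (c, s - 0) ∈ conicHull gen :=
    closure_minimal happrox hclosed (by rw [closure_Ioi]; exact self_mem_Ici)
  rw [sum_gen, Prod.mk.injEq] at hts
  have hr : 0 ≤ t none := ht none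
  exact ⟨fun j => t (some j), fun j => ht (some j), hts.1, by linarith⟩

section cstarL

variable {q : ℕ} {k : Fin (q + 1) → ℝ}

@[simp]
theorem cstarL_castSucc (w : Fin q → ℝ) (i : Fin q) : cstarL q k w i.castSucc = w i := by
  simp [cstarL]

theorem dotProduct_cstarL (hkq : k (Fin.last q) = 1) (w : Fin q → ℝ) :
    k ⬝ᵥ cstarL q k w = 1 := by
  simp only [cstarL, dotProduct, Fin.sum_univ_castSucc, Fin.snoc_castSucc, Fin.snoc_last, hkq]
  ring

theorem cstarL_castSucc_eq (hkq : k (Fin.last q) = 1) {c : Fin (q + 1) → ℝ}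
    (hc : k ⬝ᵥ c = 1) : cstarL q k (fun i => c i.castSucc) = c := by
  funext j
  refine Fin.lastCases ?_ (fun i => cstarL_castSucc _ i) j
  rw [dotProduct, Fin.sum_univ_castSucc, hkq] at hc
  simp only [cstarL, Fin.snoc_last]
  linarith

end cstarL

theorem stmt18_general (q mdim p : ℕ)
    (Γ : Matrix (Fin (q + 1)) (Fin mdim) ℝ)
    (A : Matrix (Fin p) (Fin mdim) ℝ) (b : Fin p → ℝ)
    (C : Set (Fin (q + 1) → ℝ))
    (k : Fin (q + 1) → ℝ)
    (hkq : k (Fin.last q) = 1) :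
    {v : (Fin q → ℝ) × ℝ | cstarL q k v.1 ∈ Cplus q C ∧
        (v.2 : EReal) ≤
          ⨆ u ∈ {u : Fin p → ℝ | (∀ i, 0 ≤ u i) ∧ Aᵀ *ᵥ u = Γᵀ *ᵥ cstarL q k v.1},
            ((b ⬝ᵥ u : ℝ) : EReal)} =
      {v : (Fin q → ℝ) × ℝ | ∃ (cs : Fin (q + 1) → ℝ) (u : Fin p → ℝ) (r : ℝ),
        cs ∈ Cplus q C ∧ (∀ i, 0 ≤ u i) ∧ Aᵀ *ᵥ u = Γᵀ *ᵥ cs ∧ k ⬝ᵥ cs = 1 ∧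
        0 ≤ r ∧ v = (fun i => cs i.castSucc, b ⬝ᵥ u - r)} := by
  ext v
  constructor
  · rintro ⟨hC, hs⟩
    obtain ⟨u, hu, hAu, hsu⟩ := exists_nonneg_mulVec_eq_le_dotProduct hs
    refine ⟨cstarL q k v.1, u, b ⬝ᵥ u - v.2, hC, hu, hAu, dotProduct_cstarL hkq v.1,
      sub_nonneg.2 hsu, ?_⟩
    ext <;> simp
  · rintro ⟨cs, u, r, hcs, hu, hAu, hkcs, hr, rfl⟩
    rw [mem_ofPred_eq, cstarL_castSucc_eq hkq hkcs]
    refine ⟨hcs, le_iSup₂_of_le u ⟨hu, hAu⟩ ?_⟩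
    exact EReal.coe_le_coe_iff.2 (sub_le_self _ hr)

/-- for a linear vector optimization problem, the dual image
D = {(w,s) : c*(w) ∈ C⁺, s ≤ sup{bᵀu : u ≥ 0, Aᵀu = Γᵀc*(w)}} admits the
representation
D = {(c*₁,…,c*_{q−1}, bᵀu − r) : c* ∈ C⁺, u ≥ 0, Aᵀu = Γᵀc*, kᵀc* = 1, r ≥ 0}. -/
theorem stmt18 (q mdim p : ℕ)
    (Γ : Matrix (Fin (q + 1)) (Fin mdim) ℝ)
    (A : Matrix (Fin p) (Fin mdim) ℝ) (b : Fin p → ℝ)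
    (hX : {x : Fin mdim → ℝ | ∀ i, b i ≤ (A *ᵥ x) i}.Nonempty)
    (C : Set (Fin (q + 1) → ℝ))
    (hne : C.Nonempty) (hcl : IsClosed C) (hcv : Convex ℝ C)
    (hcone : ∀ c ∈ C, ∀ t : ℝ, 0 ≤ t → t • c ∈ C)
    (hnotlin : ¬∃ W : Submodule ℝ (Fin (q + 1) → ℝ), (W : Set (Fin (q + 1) → ℝ)) = C)
    (k : Fin (q + 1) → ℝ) (hk : k ∈ intrinsicInterior ℝ C)
    (hkq : k (Fin.last q) = 1) :
    {v : (Fin q → ℝ) × ℝ | cstarL q k v.1 ∈ Cplus q C ∧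
        (v.2 : EReal) ≤
          ⨆ u ∈ {u : Fin p → ℝ | (∀ i, 0 ≤ u i) ∧ Aᵀ *ᵥ u = Γᵀ *ᵥ cstarL q k v.1},
            ((b ⬝ᵥ u : ℝ) : EReal)} =
      {v : (Fin q → ℝ) × ℝ | ∃ (cs : Fin (q + 1) → ℝ) (u : Fin p → ℝ) (r : ℝ),
        cs ∈ Cplus q C ∧ (∀ i, 0 ≤ u i) ∧ Aᵀ *ᵥ u = Γᵀ *ᵥ cs ∧ k ⬝ᵥ cs = 1 ∧
        0 ≤ r ∧ v = (fun i => cs i.castSucc, b ⬝ᵥ u - r)} :=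
  stmt18_general q mdim p Γ A b C k hkq
end
end
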